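/- arXiv:2012.04711 — 5 statements merged into one kernel-verified Lean document; each statement's English description precedes it below -/
import Mathlib

section
/- The weighted Lah numbers satisfy the recurrence W(ℓ,n,m) = (n-1)·W(ℓ,n-1,m) + Σ_{j=0}^{n-1} C(n-1,j)·j!·W(ℓ-j, n-1-j, m-1), for n ≥ 1. -/
/-!
Classify an ordered partition of a finite set `T` by the position of its largest element `a`.
If `a` directly follows some `p` in its block, deleting `a` leaves the first element of the
block, hence its weight, unchanged (`a` exceeds it), and gives a partition of `T \ {a}` with
as many blocks; `p` can be any of the other `|T| - 1` elements. If `a` heads a block `a :: t`,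
that block has weight `|t|`, and removing it gives a partition of `T \ ({a} ∪ t)` with one
block fewer; there are `C(|T| - 1, j) j!` such lists `t` of length `j`. Weights depend only
on the relative order of the elements, so the number of partitions of any `T` is
`W(ℓ, |T|, m)`.
-/

noncomputable section

open Finset

/-- The weight of a linearly ordered block (given as a list): the number of its
elements smaller than its first element. -/
def blockWeight (b : List ℕ) : ℕ := (b.filter (fun x => x < b.headI)).length

/-- `P` is a partition of `{1,…,n}` into linearly ordered blocks (nonempty lists
of distinct elements, pairwise disjoint, whose union is `{1,…,n}`). -/
def IsOrderedPartition (n : ℕ) (P : Finset (List ℕ)) : Prop :=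
  (∀ b ∈ P, b ≠ [] ∧ b.Nodup) ∧
  (∀ b₁ ∈ P, ∀ b₂ ∈ P, b₁ ≠ b₂ → ∀ x, x ∈ b₁ → x ∉ b₂) ∧
  (∀ x : ℕ, (∃ b ∈ P, x ∈ b) ↔ x ∈ Finset.Icc 1 n)

/-- The weight of an ordered partition: the sum of the weights of its blocks. -/
def partitionWeight (P : Finset (List ℕ)) : ℕ := ∑ b ∈ P, blockWeight b

/-- The weighted Lah number `W(ℓ,n,m)`: the number of partitions of `{1,…,n}`
into exactly `m` linearly ordered blocks with total weight `ℓ`.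
(It vanishes for `ℓ < 0`.) -/
def weightedLah (ℓ : ℤ) (n m : ℕ) : ℕ :=
  Set.ncard {P : Finset (List ℕ) |
    IsOrderedPartition n P ∧ P.card = m ∧ (partitionWeight P : ℤ) = ℓ}

/-- The number of cycles of a permutation of `Fin n` (fixed points count as cycles). -/
def numCycles {n : ℕ} (σ : Equiv.Perm (Fin n)) : ℕ :=
  Multiset.card σ.cycleType + (n - σ.cycleType.sum)

/-- The unsigned Stirling number of the first kind: the number of permutations of
`n` elements with exactly `m` cycles. -/
def stirlingFirst (n m : ℕ) : ℕ :=
  Nat.card {σ : Equiv.Perm (Fin n) // numCycles σ = m}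

/-- The number of descents of a permutation of `Fin m`. -/
def descentCount (m : ℕ) (σ : Equiv.Perm (Fin m)) : ℕ :=
  ((Finset.range (m - 1)).filter (fun i =>
    ((List.ofFn (fun j => (σ j : ℕ))).getD (i + 1) 0) <
      ((List.ofFn (fun j => (σ j : ℕ))).getD i 0))).card

/-- The Eulerian number `A(m,j)`: permutations of `{1,…,m}` with exactly `j` descents. -/
def eulerian (m j : ℕ) : ℕ :=
  Nat.card {σ : Equiv.Perm (Fin m) // descentCount m σ = j}

/-- The coefficient `e_{k,n,m}` of the Ehrhart polynomial of the hypersimplex. -/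
def eCoef (k n m : ℕ) : ℚ :=
  (1 / (n - 1).factorial : ℚ) *
    ∑ ℓ ∈ Finset.range k, (weightedLah ℓ n (m + 1) : ℚ) * (eulerian m (k - ℓ - 1) : ℚ)

/-- Number of lattice points of the `t`-th dilate of the hypersimplex `Δ_{k,n}`,
i.e. points of `{0,…,t}^n` with coordinate sum `k·t`. -/
def hyperCount (k n t : ℕ) : ℕ :=
  Nat.card {x : Fin n → ℤ // (∀ i, 0 ≤ x i ∧ x i ≤ (t : ℤ)) ∧ ∑ i, x i = (k : ℤ) * t}

/-- Number of lattice points of the `t`-th dilate of the half-open hypersimplex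
`Δ'_{k,n} ⊆ ℝ^{n-1}` (for `k > 1`). -/
def halfOpenCount (k n t : ℕ) : ℕ :=
  Nat.card {x : Fin (n - 1) → ℤ // (∀ i, 0 ≤ x i ∧ x i ≤ (t : ℤ)) ∧
    ((k : ℤ) - 1) * t < ∑ i, x i ∧ ∑ i, x i ≤ (k : ℤ) * t}

/-- Number of lattice points of the `t`-th dilate of the independence polytope of
`U_{k,n}`, i.e. points of `{0,…,t}^n` with coordinate sum at most `k·t`. -/
def indepCount (k n t : ℕ) : ℕ :=
  Nat.card {x : Fin n → ℤ // (∀ i, 0 ≤ x i ∧ x i ≤ (t : ℤ)) ∧ ∑ i, x i ≤ (k : ℤ) * t}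

/-- Number of lattice points of a region `S ⊆ ℝ^d`. -/
def latticeCount {d : ℕ} (S : Set (Fin d → ℝ)) : ℕ :=
  Nat.card {x : Fin d → ℤ // (fun i => (x i : ℝ)) ∈ S}

namespace WeightedLah

section Lists

variable {α : Type*} {p a x : α} {l b t : List α}

theorem headI_mem [Inhabited α] (h : l ≠ []) : l.headI ∈ l := by
  obtain ⟨x, xs, rfl⟩ := List.exists_cons_of_ne_nil h
  exact List.mem_cons_self

variable [DecidableEq α]

def insertAfter (p a : α) : List α → List α
  | [] => []
  | x :: xs => if x = p then x :: a :: xs else x :: insertAfter p a xs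

theorem insertAfter_perm (hp : p ∈ l) : (insertAfter p a l).Perm (a :: l) := by
  induction l with
  | nil => simp at hp
  | cons x xs ih =>
    by_cases hx : x = p
    · simpa [insertAfter, hx] using List.Perm.swap a x xs
    · have hp : p ∈ xs := (List.mem_cons.1 hp).resolve_left (Ne.symm hx)
      simpa [insertAfter, hx] using ((ih hp).cons x).trans (List.Perm.swap a x xs)

theorem mem_insertAfter (hp : p ∈ l) : x ∈ insertAfter p a l ↔ x = a ∨ x ∈ l := by
  rw [(insertAfter_perm hp).mem_iff, List.mem_cons]

theorem erase_insertAfter (ha : a ∉ l) : (insertAfter p a l).erase a = l := by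
  induction l with
  | nil => rfl
  | cons x xs ih =>
    have hxa : x ≠ a := fun h => ha (h ▸ List.mem_cons_self)
    by_cases hx : x = p
    · subst hx
      simp [insertAfter, hxa]
    · simp [insertAfter, hx, hxa, ih (fun h => ha (List.mem_cons_of_mem _ h))]

variable [Inhabited α]

theorem headI_insertAfter : (insertAfter p a l).headI = l.headI := by
  cases l with
  | nil => rfl
  | cons x xs => by_cases hx : x = p <;> simp [insertAfter, hx]

def predecessor (a : α) : List α → α
  | x :: y :: xs => if y = a then x else predecessor a (y :: xs)
  | _ => default

theorem predecessor_insertAfter (ha : a ∉ l) (hp : p ∈ l) :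
    predecessor a (insertAfter p a l) = p := by
  induction l with
  | nil => simp at hp
  | cons x xs ih =>
    by_cases hx : x = p
    · simp [insertAfter, hx, predecessor]
    · have hp : p ∈ xs := (List.mem_cons.1 hp).resolve_left (Ne.symm hx)
      have hax : a ∉ xs := fun h => ha (List.mem_cons_of_mem _ h)
      have hza : (insertAfter p a xs).headI ≠ a := by
        rw [headI_insertAfter]
        exact fun h => hax (h ▸ headI_mem (List.ne_nil_of_mem hp))
      obtain ⟨z, zs, hzs⟩ := List.exists_cons_of_ne_nil
        (List.ne_nil_of_mem ((mem_insertAfter (a := a) hp).2 (Or.inr hp)))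
      rw [hzs, List.headI_cons] at hza
      rw [insertAfter, if_neg hx, hzs, predecessor, if_neg hza, ← hzs, ih hax hp]

theorem predecessor_spec (hnd : b.Nodup) (ha : a ∈ b) (hh : b.headI ≠ a) :
    predecessor a b ∈ b.erase a ∧ insertAfter (predecessor a b) a (b.erase a) = b := by
  induction b with
  | nil => simp at ha
  | cons x xs ih =>
    have hxa : x ≠ a := by simpa using hh
    have haxs : a ∈ xs := (List.mem_cons.1 ha).resolve_left (Ne.symm hxa)
    obtain ⟨y, ys, rfl⟩ := List.exists_cons_of_ne_nil (List.ne_nil_of_mem haxs)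
    have hxnot : x ∉ y :: ys := (List.nodup_cons.1 hnd).1
    by_cases hy : y = a
    · subst hy
      simp [predecessor, hxa, insertAfter]
    · obtain ⟨hmem, hins⟩ := ih hnd.of_cons haxs (by simpa using hy)
      have hpred : predecessor a (x :: y :: ys) = predecessor a (y :: ys) := by
        simp [predecessor, hy]
      have hxp : x ≠ predecessor a (y :: ys) := fun h => hxnot (h ▸ List.mem_of_mem_erase hmem)
      rw [hpred, List.erase_cons_tail (by simpa using hxa), insertAfter, if_neg hxp, hins]
      exact ⟨List.mem_cons_of_mem _ hmem, rfl⟩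

/-- Where `a` sits in the block `b`: `.inr t` if `b = a :: t`, and `.inl p` if `a`
directly follows `p`. -/
def locateIn (a : α) (b : List α) : α ⊕ List α :=
  if b.headI = a then .inr b.tail else .inl (predecessor a b)

theorem locateIn_eq_inr_iff (ha : a ∈ b) : locateIn a b = .inr t ↔ b = a :: t := by
  obtain ⟨x, xs, rfl⟩ := List.exists_cons_of_ne_nil (List.ne_nil_of_mem ha)
  by_cases hx : x = a <;> simp [locateIn, hx]

theorem locateIn_eq_inl_iff (hnd : b.Nodup) (ha : a ∈ b) :
    locateIn a b = .inl p ↔ p ∈ b.erase a ∧ insertAfter p a (b.erase a) = b := by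
  have hane : a ∉ b.erase a := hnd.not_mem_erase
  constructor
  · intro h
    have hh : b.headI ≠ a := fun hh => by simp [locateIn, hh] at h
    simp only [locateIn, if_neg hh, Sum.inl.injEq] at h
    exact h ▸ predecessor_spec hnd ha hh
  · rintro ⟨hp, hins⟩
    have hh : b.headI ≠ a := by
      rw [← hins, headI_insertAfter]
      intro h
      have := headI_mem (List.ne_nil_of_mem hp)
      rw [h] at this
      exact hane this
    rw [locateIn, if_neg hh, ← hins, predecessor_insertAfter hane hp]

end Lists

theorem injOn_map {α β : Type*} {f : α → β} {s : Set α} (hf : s.InjOn f) :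
    {l : List α | ∀ x ∈ l, x ∈ s}.InjOn (List.map f) := by
  intro l₁ h₁ l₂ h₂ h
  induction l₁ generalizing l₂ with
  | nil => exact (List.map_eq_nil_iff.1 h.symm).symm
  | cons x xs ih =>
    obtain ⟨y, ys, rfl, hxy, hys⟩ := List.map_eq_cons_iff.1 h.symm
    simp only [Set.mem_ofPred_eq, List.mem_cons, forall_eq_or_imp] at h₁ h₂
    rw [hf h₁.1 h₂.1 hxy.symm, ih h₁.2 h₂.2 hys.symm]

section NodupLists

variable {α : Type*} [DecidableEq α] {s : Finset α} {t : List α}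

def nodupLists (s : Finset α) : Finset (List α) :=
  s.powerset.biUnion fun u => u.toList.permutations.toFinset

theorem mem_nodupLists : t ∈ nodupLists s ↔ t.Nodup ∧ ∀ x ∈ t, x ∈ s := by
  simp only [nodupLists, mem_biUnion, mem_powerset, List.mem_toFinset, List.mem_permutations]
  constructor
  · rintro ⟨u, hus, htu⟩
    exact ⟨htu.nodup_iff.2 u.nodup_toList, fun x hx => hus (mem_toList.1 (htu.subset hx))⟩
  · rintro ⟨hnd, hts⟩
    exact ⟨t.toFinset, fun x hx => hts x (List.mem_toFinset.1 hx),
      (List.toFinset_toList hnd).symm⟩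

theorem sum_nodupLists {M : Type*} [AddCommMonoid M] (s : Finset α) (f : ℕ → M) :
    ∑ t ∈ nodupLists s, f t.length =
      ∑ j ∈ range (#s + 1), ((#s).choose j * j.factorial) • f j := by
  have hdisj : (s.powerset : Set (Finset α)).PairwiseDisjoint
      fun u => u.toList.permutations.toFinset := by
    intro u _ v _ huv
    simp only [Function.onFun, disjoint_left, List.mem_toFinset, List.mem_permutations]
    exact fun t htu htv => huv (Finset.perm_toList.1 (htu.symm.trans htv))
  have hperm (u : Finset α) :
      ∑ t ∈ u.toList.permutations.toFinset, f t.length = (#u).factorial • f #u := by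
    rw [sum_congr rfl (g := fun _ => f #u), sum_const,
      List.toFinset_card_of_nodup (List.nodup_permutations _ u.nodup_toList),
      List.length_permutations, length_toList]
    intro t ht
    rw [List.mem_toFinset, List.mem_permutations] at ht
    rw [ht.length_eq, length_toList]
  rw [nodupLists, sum_biUnion hdisj, sum_congr rfl fun u _ => hperm u,
    sum_powerset_apply_card (fun j => j.factorial • f j)]
  simp only [smul_smul]

end NodupLists

theorem blockWeight_insertAfter {p a : ℕ} {l : List ℕ} (hp : p ∈ l) (ha : l.headI ≤ a) :
    blockWeight (insertAfter p a l) = blockWeight l := by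
  unfold blockWeight
  rw [headI_insertAfter, ((insertAfter_perm hp).filter _).length_eq, List.filter_cons]
  simp [not_lt.2 ha]

theorem blockWeight_cons {a : ℕ} {t : List ℕ} (h : ∀ x ∈ t, x < a) :
    blockWeight (a :: t) = t.length := by
  unfold blockWeight
  rw [List.headI_cons, List.filter_cons_of_neg (by simp), List.filter_eq_self.2 (by simpa)]

theorem blockWeight_map {f : ℕ → ℕ} {s : Set ℕ} (hf : StrictMonoOn f s) {l : List ℕ}
    (hl : ∀ x ∈ l, x ∈ s) : blockWeight (l.map f) = blockWeight l := by
  cases l with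
  | nil => rfl
  | cons y ys =>
    rw [blockWeight, blockWeight, List.map_cons, List.headI_cons, ← List.map_cons,
      List.filter_map, List.length_map, List.headI_cons]
    congr 1
    refine List.filter_congr fun x hx => ?_
    exact decide_eq_decide.2 (hf.lt_iff_lt (hl x hx) (hl y List.mem_cons_self))

def IsOrderedPartitionOn (T : Finset ℕ) (P : Finset (List ℕ)) : Prop :=
  (∀ b ∈ P, b ≠ [] ∧ b.Nodup) ∧
  (∀ b₁ ∈ P, ∀ b₂ ∈ P, b₁ ≠ b₂ → ∀ x, x ∈ b₁ → x ∉ b₂) ∧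
  (∀ x : ℕ, (∃ b ∈ P, x ∈ b) ↔ x ∈ T)

def partitionsOn (ℓ : ℤ) (T : Finset ℕ) (m : ℕ) : Set (Finset (List ℕ)) :=
  {P | IsOrderedPartitionOn T P ∧ P.card = m ∧ (partitionWeight P : ℤ) = ℓ}

theorem weightedLah_eq_ncard (ℓ : ℤ) (n m : ℕ) :
    weightedLah ℓ n m = (partitionsOn ℓ (Icc 1 n) m).ncard := rfl

open Classical in
def blockOf {α : Type*} (x : α) (P : Finset (List α)) : List α :=
  if h : ∃ b ∈ P, x ∈ b then h.choose else []

namespace IsOrderedPartitionOn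

variable {T : Finset ℕ} {P : Finset (List ℕ)} {b c : List ℕ} {x : ℕ}

theorem mem_of_mem (hP : IsOrderedPartitionOn T P) (hb : b ∈ P) (hx : x ∈ b) : x ∈ T :=
  (hP.2.2 x).1 ⟨b, hb, hx⟩

theorem eq_of_mem_of_mem (hP : IsOrderedPartitionOn T P) (hb : b ∈ P) (hc : c ∈ P)
    (hxb : x ∈ b) (hxc : x ∈ c) : b = c :=
  by_contra fun hne => hP.2.1 b hb c hc hne x hxb hxc

theorem blockOf_mem (hP : IsOrderedPartitionOn T P) (hx : x ∈ T) :
    blockOf x P ∈ P ∧ x ∈ blockOf x P := by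
  have h := (hP.2.2 x).2 hx
  rw [blockOf, dif_pos h]
  exact h.choose_spec

theorem blockOf_eq (hP : IsOrderedPartitionOn T P) (hb : b ∈ P) (hx : x ∈ b) :
    blockOf x P = b :=
  have h := hP.blockOf_mem (hP.mem_of_mem hb hx)
  hP.eq_of_mem_of_mem h.1 hb h.2 hx

theorem erase_block (hP : IsOrderedPartitionOn T P) (hb : b ∈ P) :
    IsOrderedPartitionOn (T \ b.toFinset) (P.erase b) := by
  refine ⟨fun c hc => hP.1 c (mem_of_mem_erase hc),
    fun c₁ h₁ c₂ h₂ => hP.2.1 c₁ (mem_of_mem_erase h₁) c₂ (mem_of_mem_erase h₂),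
    fun x => ?_⟩
  rw [mem_sdiff, List.mem_toFinset]
  constructor
  · rintro ⟨c, hc, hx⟩
    obtain ⟨hcb, hcP⟩ := Finset.mem_erase.1 hc
    exact ⟨hP.mem_of_mem hcP hx, fun hxb => hcb (hP.eq_of_mem_of_mem hcP hb hx hxb)⟩
  · rintro ⟨hxT, hxb⟩
    obtain ⟨c, hc, hx⟩ := (hP.2.2 x).2 hxT
    exact ⟨c, Finset.mem_erase.2 ⟨fun h => hxb (h ▸ hx), hc⟩, hx⟩

theorem notMem (hP : IsOrderedPartitionOn T P) (hc : c ≠ []) (hcT : ∀ x ∈ c, x ∉ T) :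
    c ∉ P := fun hcP =>
  have ⟨x, hx⟩ := List.exists_mem_of_ne_nil c hc
  hcT x hx (hP.mem_of_mem hcP hx)

theorem insert_block (hP : IsOrderedPartitionOn T P) (hc : c ≠ []) (hnd : c.Nodup)
    (hcT : ∀ x ∈ c, x ∉ T) : IsOrderedPartitionOn (T ∪ c.toFinset) (insert c P) := by
  refine ⟨?_, ?_, fun x => ?_⟩
  · intro d hd
    rcases Finset.mem_insert.1 hd with rfl | hd
    exacts [⟨hc, hnd⟩, hP.1 d hd]
  · intro d₁ h₁ d₂ h₂ hne x hx₁ hx₂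
    rcases Finset.mem_insert.1 h₁ with rfl | hd₁ <;>
      rcases Finset.mem_insert.1 h₂ with rfl | hd₂
    · exact hne rfl
    · exact hcT x hx₁ (hP.mem_of_mem hd₂ hx₂)
    · exact hcT x hx₂ (hP.mem_of_mem hd₁ hx₁)
    · exact hP.2.1 d₁ hd₁ d₂ hd₂ hne x hx₁ hx₂
  · simp only [Finset.mem_insert, exists_eq_or_imp, Finset.mem_union, List.mem_toFinset,
      ← hP.2.2 x]
    exact or_comm

end IsOrderedPartitionOn

variable {ℓ : ℤ} {T U : Finset ℕ} {m a p : ℕ} {P Q : Finset (List ℕ)} {b c t : List ℕ}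
  {f : ℕ → ℕ}

theorem erase_mem_partitionsOn (hP : P ∈ partitionsOn ℓ T m) (hb : b ∈ P) :
    P.erase b ∈ partitionsOn (ℓ - blockWeight b) (T \ b.toFinset) (m - 1) := by
  obtain ⟨hP, rfl, rfl⟩ := hP
  refine ⟨hP.erase_block hb, card_erase_of_mem hb, ?_⟩
  rw [partitionWeight, partitionWeight, ← add_sum_erase P blockWeight hb]
  push_cast
  ring

theorem insert_mem_partitionsOn (hQ : Q ∈ partitionsOn ℓ T m) (hc : c ≠ []) (hnd : c.Nodup)
    (hcT : ∀ x ∈ c, x ∉ T) :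
    insert c Q ∈ partitionsOn (ℓ + blockWeight c) (T ∪ c.toFinset) (m + 1) := by
  obtain ⟨hQ, rfl, rfl⟩ := hQ
  have hcQ := hQ.notMem hc hcT
  refine ⟨hQ.insert_block hc hnd hcT, card_insert_of_notMem hcQ, ?_⟩
  rw [partitionWeight, partitionWeight, sum_insert hcQ]
  push_cast
  ring

theorem replace_mem_partitionsOn (hP : P ∈ partitionsOn ℓ T m) (hb : b ∈ P) (hc : c ≠ [])
    (hnd : c.Nodup) (hcT : ∀ x ∈ c, x ∉ T \ b.toFinset) (hw : blockWeight c = blockWeight b) :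
    insert c (P.erase b) ∈ partitionsOn ℓ (T \ b.toFinset ∪ c.toFinset) m := by
  have hm : 1 ≤ m := hP.2.1 ▸ card_pos.2 ⟨b, hb⟩
  have h := insert_mem_partitionsOn (erase_mem_partitionsOn hP hb) hc hnd hcT
  rwa [hw, sub_add_cancel, Nat.sub_add_cancel hm] at h

theorem finite_partitionsOn : (partitionsOn ℓ T m).Finite :=
  (nodupLists T).powerset.finite_toSet.subset fun _ hP => mem_coe.2 <| mem_powerset.2 fun b hb =>
    mem_nodupLists.2 ⟨(hP.1.1 b hb).2, fun _ hx => hP.1.mem_of_mem hb hx⟩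

theorem IsOrderedPartitionOn.image_map (hP : IsOrderedPartitionOn T P) (hf : Set.BijOn f T U) :
    IsOrderedPartitionOn U (P.image (List.map f)) := by
  have hinj : ∀ b ∈ P, Set.InjOn f {x | x ∈ b} := fun b hb x hx y hy =>
    hf.injOn (hP.mem_of_mem hb hx) (hP.mem_of_mem hb hy)
  refine ⟨?_, ?_, fun y => ?_⟩
  · simp only [mem_image, forall_exists_index, and_imp, forall_apply_eq_imp_iff₂]
    exact fun b hb => ⟨by simpa using (hP.1 b hb).1, (hP.1 b hb).2.map_on (hinj b hb)⟩
  · simp only [mem_image, forall_exists_index, and_imp]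
    rintro _ b₁ hb₁ rfl _ b₂ hb₂ rfl hne y hy₁ hy₂
    obtain ⟨x₁, hx₁, rfl⟩ := List.mem_map.1 hy₁
    obtain ⟨x₂, hx₂, hfx⟩ := List.mem_map.1 hy₂
    rw [hf.injOn (hP.mem_of_mem hb₂ hx₂) (hP.mem_of_mem hb₁ hx₁) hfx] at hx₂
    exact hP.2.1 b₁ hb₁ b₂ hb₂ (fun h => hne (h ▸ rfl)) x₁ hx₁ hx₂
  · simp only [mem_image, exists_exists_and_eq_and, List.mem_map]
    constructor
    · rintro ⟨b, hb, x, hx, rfl⟩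
      exact hf.mapsTo (hP.mem_of_mem hb hx)
    · intro hy
      obtain ⟨x, hxT, rfl⟩ := hf.surjOn hy
      obtain ⟨b, hb, hxb⟩ := (hP.2.2 x).2 hxT
      exact ⟨b, hb, x, hxb, rfl⟩

theorem image_map_mem_partitionsOn (hP : P ∈ partitionsOn ℓ T m) (hmono : StrictMonoOn f T)
    (hf : Set.BijOn f T U) : P.image (List.map f) ∈ partitionsOn ℓ U m := by
  obtain ⟨hP, rfl, rfl⟩ := hP
  have hsub : ∀ b ∈ P, ∀ x ∈ b, x ∈ T := fun b hb _ hx => hP.mem_of_mem hb hx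
  have hinj : Set.InjOn (List.map f) P := fun b₁ h₁ b₂ h₂ h =>
    injOn_map hf.injOn (hsub b₁ h₁) (hsub b₂ h₂) h
  refine ⟨hP.image_map hf, card_image_of_injOn hinj, ?_⟩
  rw [partitionWeight, partitionWeight, sum_image hinj]
  exact congrArg _ (sum_congr rfl fun b hb => blockWeight_map hmono (hsub b hb))

theorem image_map_image_map {g : ℕ → ℕ} (hgf : Set.LeftInvOn g f T)
    (hP : IsOrderedPartitionOn T P) : (P.image (List.map f)).image (List.map g) = P := by
  rw [image_image]
  refine (image_congr fun b hb => ?_).trans image_id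
  rw [Function.comp_apply, List.map_map, id]
  exact (List.map_congr_left fun x hx => hgf (hP.mem_of_mem hb hx)).trans (List.map_id b)

theorem ncard_partitionsOn_eq_of_strictMonoOn (hmono : StrictMonoOn f T)
    (hf : Set.BijOn f T U) : (partitionsOn ℓ T m).ncard = (partitionsOn ℓ U m).ncard := by
  set g := Function.invFunOn f T
  have hinv : Set.InvOn g f T U := hf.invOn_invFunOn
  have hg : Set.BijOn g U T := hf.symm hinv.symm
  have hgmono : StrictMonoOn g U := fun u₁ h₁ u₂ h₂ hlt =>
    (hmono.lt_iff_lt (hg.mapsTo h₁) (hg.mapsTo h₂)).1 (by rwa [hinv.2 h₁, hinv.2 h₂])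
  refine Set.BijOn.ncard_eq (Set.InvOn.bijOn (f' := fun Q => Q.image (List.map g))
    ⟨fun P hP => image_map_image_map hinv.1 hP.1, fun Q hQ => image_map_image_map hinv.2 hQ.1⟩
    (fun P hP => image_map_mem_partitionsOn hP hmono hf)
    (fun Q hQ => image_map_mem_partitionsOn hQ hgmono hg))

def rank (T : Finset ℕ) (y : ℕ) : ℕ := #{x ∈ T | x < y} + 1

theorem strictMonoOn_rank (T : Finset ℕ) : StrictMonoOn (rank T) T := by
  intro y₁ h₁ y₂ h₂ hlt
  refine Nat.add_lt_add_right (card_lt_card ((ssubset_iff_of_subset fun x hx => ?_).2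
    ⟨y₁, ?_, by simp⟩)) 1
  · rw [mem_filter] at hx ⊢
    exact ⟨hx.1, hx.2.trans hlt⟩
  · exact mem_filter.2 ⟨h₁, hlt⟩

theorem bijOn_rank (T : Finset ℕ) : Set.BijOn (rank T) T (Icc 1 #T) := by
  have hmaps : Set.MapsTo (rank T) T (Icc 1 #T) := fun y hy =>
    mem_Icc.2 ⟨Nat.le_add_left 1 _, card_lt_card (filter_ssubset.2 ⟨y, hy, lt_irrefl y⟩)⟩
  refine ⟨hmaps, (strictMonoOn_rank T).injOn, ?_⟩
  exact surjOn_of_injOn_of_card_le _ hmaps (strictMonoOn_rank T).injOn (by simp)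

theorem ncard_partitionsOn (ℓ : ℤ) (T : Finset ℕ) (m : ℕ) :
    (partitionsOn ℓ T m).ncard = weightedLah ℓ #T m :=
  (ncard_partitionsOn_eq_of_strictMonoOn (strictMonoOn_rank T) (bijOn_rank T)).trans
    (weightedLah_eq_ncard ℓ #T m).symm

section Locate

variable {α : Type*} [DecidableEq α]

def locate [Inhabited α] (a : α) (P : Finset (List α)) : α ⊕ List α :=
  locateIn a (blockOf a P)

def eraseElem (a : α) (P : Finset (List α)) : Finset (List α) :=
  insert ((blockOf a P).erase a) (P.erase (blockOf a P))

def insertElemAfter (p a : α) (Q : Finset (List α)) : Finset (List α) :=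
  insert (insertAfter p a (blockOf p Q)) (Q.erase (blockOf p Q))

end Locate

theorem eraseElem_mem_partitionsOn (haT : a ∈ T) (hmax : ∀ x ∈ T, x ≤ a)
    (hP : P ∈ partitionsOn ℓ T m) (hloc : locate a P = .inl p) :
    eraseElem a P ∈ partitionsOn ℓ (T.erase a) m := by
  obtain ⟨hbP, hab⟩ := hP.1.blockOf_mem haT
  have hnd := (hP.1.1 _ hbP).2
  obtain ⟨hp, hins⟩ := (locateIn_eq_inl_iff hnd hab).1 hloc
  unfold eraseElem
  set b := blockOf a P
  have hbT : ∀ x ∈ b, x ∈ T := fun x hx => hP.1.mem_of_mem hbP hx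
  have hw : blockWeight (b.erase a) = blockWeight b := by
    conv_rhs => rw [← hins]
    exact (blockWeight_insertAfter hp
      (hmax _ (hbT _ (List.mem_of_mem_erase (headI_mem (List.ne_nil_of_mem hp)))))).symm
  have h := replace_mem_partitionsOn hP hbP (List.ne_nil_of_mem hp) (hnd.erase a)
    (fun x hx => notMem_sdiff_of_mem_right (List.mem_toFinset.2 (List.mem_of_mem_erase hx))) hw
  convert h using 2
  ext x
  simp only [mem_erase, mem_union, mem_sdiff, List.mem_toFinset, hnd.mem_erase_iff]
  grind

theorem insertElemAfter_mem_partitionsOn (haT : a ∈ T) (hmax : ∀ x ∈ T, x ≤ a)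
    (hp : p ∈ T.erase a)
    (hQ : Q ∈ partitionsOn ℓ (T.erase a) m) :
    insertElemAfter p a Q ∈ {P ∈ partitionsOn ℓ T m | locate a P = .inl p} := by
  obtain ⟨hcQ, hpc⟩ := hQ.1.blockOf_mem hp
  unfold insertElemAfter
  set c := blockOf p Q
  have hcT : ∀ x ∈ c, x ∈ T.erase a := fun x hx => hQ.1.mem_of_mem hcQ hx
  have hac : a ∉ c := fun h => (mem_erase.1 (hcT a h)).1 rfl
  have had : a ∈ insertAfter p a c := (mem_insertAfter hpc).2 (.inl rfl)
  have hnd : (insertAfter p a c).Nodup :=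
    (insertAfter_perm hpc).nodup_iff.2 (List.nodup_cons.2 ⟨hac, (hQ.1.1 c hcQ).2⟩)
  have hw := blockWeight_insertAfter (a := a) hpc
    (hmax _ (mem_of_mem_erase (hcT _ (headI_mem (List.ne_nil_of_mem hpc)))))
  have hR := replace_mem_partitionsOn hQ hcQ (List.ne_nil_of_mem had) hnd (fun x hx h => by
    rw [mem_sdiff, List.mem_toFinset, mem_erase] at h
    rcases (mem_insertAfter hpc).1 hx with rfl | hx
    exacts [h.1.1 rfl, h.2 hx]) hw
  have hground : T.erase a \ c.toFinset ∪ (insertAfter p a c).toFinset = T := by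
    ext x
    simp only [mem_union, mem_sdiff, List.mem_toFinset, mem_erase, mem_insertAfter hpc]
    have := hcT x
    rw [mem_erase] at this
    grind
  rw [hground] at hR
  refine ⟨hR, ?_⟩
  rw [locate, hR.1.blockOf_eq (mem_insert_self _ _) had, locateIn_eq_inl_iff hnd had,
    erase_insertAfter hac]
  exact ⟨hpc, rfl⟩

theorem insertElemAfter_eraseElem (haT : a ∈ T) (hmax : ∀ x ∈ T, x ≤ a)
    (hP : P ∈ partitionsOn ℓ T m) (hloc : locate a P = .inl p) :
    insertElemAfter p a (eraseElem a P) = P := by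
  obtain ⟨hbP, hab⟩ := hP.1.blockOf_mem haT
  have hnd := (hP.1.1 _ hbP).2
  obtain ⟨hp, hins⟩ := (locateIn_eq_inl_iff hnd hab).1 hloc
  have hR := eraseElem_mem_partitionsOn haT hmax hP hloc
  have hcP : (blockOf a P).erase a ∉ P.erase (blockOf a P) := fun h =>
    (mem_erase.1 h).1 (hP.1.eq_of_mem_of_mem (mem_of_mem_erase h) hbP hp (List.mem_of_mem_erase hp))
  rw [insertElemAfter, hR.1.blockOf_eq (mem_insert_self _ _) hp, hins, eraseElem,
    erase_insert hcP, insert_erase hbP]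

theorem eraseElem_insertElemAfter (haT : a ∈ T) (hmax : ∀ x ∈ T, x ≤ a)
    (hp : p ∈ T.erase a)
    (hQ : Q ∈ partitionsOn ℓ (T.erase a) m) :
    eraseElem a (insertElemAfter p a Q) = Q := by
  obtain ⟨hcQ, hpc⟩ := hQ.1.blockOf_mem hp
  have hR := (insertElemAfter_mem_partitionsOn haT hmax hp hQ).1
  have hac : a ∉ blockOf p Q := fun h => (mem_erase.1 (hQ.1.mem_of_mem hcQ h)).1 rfl
  have had : a ∈ insertAfter p a (blockOf p Q) := (mem_insertAfter hpc).2 (.inl rfl)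
  have hdQ : insertAfter p a (blockOf p Q) ∉ Q.erase (blockOf p Q) := fun h =>
    (mem_erase.1 (hQ.1.mem_of_mem (mem_of_mem_erase h) had)).1 rfl
  rw [eraseElem, hR.1.blockOf_eq (mem_insert_self _ _) had, erase_insertAfter hac, insertElemAfter,
    erase_insert hdQ, insert_erase hcQ]

theorem blockWeight_cons_of_mem_erase (hmax : ∀ x ∈ T, x ≤ a)
    (htT : ∀ x ∈ t, x ∈ T.erase a) :
    blockWeight (a :: t) = t.length :=
  blockWeight_cons fun x hx =>
    (hmax x (mem_of_mem_erase (htT x hx))).lt_of_ne (ne_of_mem_erase (htT x hx))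

theorem erase_blockOf_mem_partitionsOn (haT : a ∈ T) (hmax : ∀ x ∈ T, x ≤ a)
    (hP : P ∈ partitionsOn ℓ T m) (hloc : locate a P = .inr t) :
    P.erase (blockOf a P) ∈ partitionsOn (ℓ - t.length) (T.erase a \ t.toFinset) (m - 1) := by
  obtain ⟨hbP, hab⟩ := hP.1.blockOf_mem haT
  have hb := (locateIn_eq_inr_iff hab).1 hloc
  have hnd := (hP.1.1 _ hbP).2
  rw [hb, List.nodup_cons] at hnd
  have htT : ∀ x ∈ t, x ∈ T.erase a := fun x hx =>
    mem_erase.2 ⟨fun h => hnd.1 (h ▸ hx),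
      hP.1.mem_of_mem hbP (hb ▸ List.mem_cons_of_mem a hx)⟩
  have h := erase_mem_partitionsOn hP hbP
  rwa [hb, blockWeight_cons_of_mem_erase hmax htT, List.toFinset_cons, sdiff_insert,
    ← erase_sdiff_comm, ← hb] at h

theorem insert_cons_mem_partitionsOn (haT : a ∈ T) (hmax : ∀ x ∈ T, x ≤ a) (hm : 1 ≤ m)
    (htnd : t.Nodup) (htT : ∀ x ∈ t, x ∈ T.erase a)
    (hQ : Q ∈ partitionsOn (ℓ - t.length) (T.erase a \ t.toFinset) (m - 1)) :
    insert (a :: t) Q ∈ {P ∈ partitionsOn ℓ T m | locate a P = .inr t} := by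
  have hat : a ∉ t := fun h => (mem_erase.1 (htT a h)).1 rfl
  have hR := insert_mem_partitionsOn hQ (List.cons_ne_nil a t) (List.nodup_cons.2 ⟨hat, htnd⟩)
    (fun x hx h => by
      rw [mem_sdiff, mem_erase, List.mem_toFinset] at h
      rcases List.mem_cons.1 hx with rfl | hx
      exacts [h.1.1 rfl, h.2 hx])
  have hground : T.erase a \ t.toFinset ∪ (a :: t).toFinset = T := by
    rw [List.toFinset_cons, union_insert, sdiff_union_of_subset
      (fun x hx => htT x (List.mem_toFinset.1 hx)), insert_erase haT]
  rw [blockWeight_cons_of_mem_erase hmax htT, sub_add_cancel, Nat.sub_add_cancel hm,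
    hground] at hR
  refine ⟨hR, ?_⟩
  rw [locate, hR.1.blockOf_eq (mem_insert_self _ _) List.mem_cons_self,
    locateIn_eq_inr_iff List.mem_cons_self]

theorem insert_cons_erase_blockOf (haT : a ∈ T) (hP : P ∈ partitionsOn ℓ T m)
    (hloc : locate a P = .inr t) : insert (a :: t) (P.erase (blockOf a P)) = P := by
  obtain ⟨hbP, hab⟩ := hP.1.blockOf_mem haT
  rw [← (locateIn_eq_inr_iff hab).1 hloc, insert_erase hbP]

theorem erase_blockOf_insert_cons (haT : a ∈ T) (hmax : ∀ x ∈ T, x ≤ a) (hm : 1 ≤ m)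
    (htnd : t.Nodup) (htT : ∀ x ∈ t, x ∈ T.erase a)
    (hQ : Q ∈ partitionsOn (ℓ - t.length) (T.erase a \ t.toFinset) (m - 1)) :
    (insert (a :: t) Q).erase (blockOf a (insert (a :: t) Q)) = Q := by
  have hR := (insert_cons_mem_partitionsOn haT hmax hm htnd htT hQ).1
  have hQa : a :: t ∉ Q := fun h =>
    (mem_erase.1 (mem_sdiff.1 (hQ.1.mem_of_mem h List.mem_cons_self)).1).1 rfl
  rw [hR.1.blockOf_eq (mem_insert_self _ _) List.mem_cons_self, erase_insert hQa]

theorem ncard_locate_eq_inl (haT : a ∈ T) (hmax : ∀ x ∈ T, x ≤ a) (hp : p ∈ T.erase a) :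
    {P ∈ partitionsOn ℓ T m | locate a P = .inl p}.ncard =
      (partitionsOn ℓ (T.erase a) m).ncard :=
  Set.BijOn.ncard_eq <| Set.InvOn.bijOn (f' := insertElemAfter p a)
    ⟨fun _ hP => insertElemAfter_eraseElem haT hmax hP.1 hP.2,
      fun _ hQ => eraseElem_insertElemAfter haT hmax hp hQ⟩
    (fun _ hP => eraseElem_mem_partitionsOn haT hmax hP.1 hP.2)
    (fun _ hQ => insertElemAfter_mem_partitionsOn haT hmax hp hQ)

theorem ncard_locate_eq_inr (haT : a ∈ T) (hmax : ∀ x ∈ T, x ≤ a) (hm : 1 ≤ m)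
    (htnd : t.Nodup) (htT : ∀ x ∈ t, x ∈ T.erase a) :
    {P ∈ partitionsOn ℓ T m | locate a P = .inr t}.ncard =
      (partitionsOn (ℓ - t.length) (T.erase a \ t.toFinset) (m - 1)).ncard :=
  Set.BijOn.ncard_eq <|
    Set.InvOn.bijOn (f := fun P => P.erase (blockOf a P)) (f' := insert (a :: t))
    ⟨fun _ hP => insert_cons_erase_blockOf haT hP.1 hP.2,
      fun _ hQ => erase_blockOf_insert_cons haT hmax hm htnd htT hQ⟩
    (fun _ hP => erase_blockOf_mem_partitionsOn haT hmax hP.1 hP.2)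
    (fun _ hQ => insert_cons_mem_partitionsOn haT hmax hm htnd htT hQ)

theorem locate_mem_disjSum (haT : a ∈ T) (hP : IsOrderedPartitionOn T P) :
    locate a P ∈ (T.erase a).disjSum (nodupLists (T.erase a)) := by
  obtain ⟨hbP, hab⟩ := hP.blockOf_mem haT
  have hnd := (hP.1 _ hbP).2
  have herase : ∀ x ∈ (blockOf a P).erase a, x ∈ T.erase a := fun x hx =>
    mem_erase.2 ⟨(hnd.mem_erase_iff.1 hx).1, hP.mem_of_mem hbP (List.mem_of_mem_erase hx)⟩
  rcases h : locate a P with p | t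
  · exact inl_mem_disjSum.2 (herase p ((locateIn_eq_inl_iff hnd hab).1 h).1)
  · rw [locate, locateIn_eq_inr_iff hab] at h
    rw [h, List.erase_cons_head] at herase
    rw [h, List.nodup_cons] at hnd
    exact inr_mem_disjSum.2 (mem_nodupLists.2 ⟨hnd.2, herase⟩)

theorem ncard_partitionsOn_eq (haT : a ∈ T) (hmax : ∀ x ∈ T, x ≤ a) (hm : 1 ≤ m) :
    (partitionsOn ℓ T m).ncard =
      (#T - 1) * weightedLah ℓ (#T - 1) m +
        ∑ j ∈ range #T, (#T - 1).choose j * j.factorial *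
          weightedLah (ℓ - (j : ℤ)) (#T - 1 - j) (m - 1) := by
  set S := (finite_partitionsOn (ℓ := ℓ) (T := T) (m := m)).toFinset
  have hfiber (k : ℕ ⊕ List ℕ) :
      #{P ∈ S | locate a P = k} = {P ∈ partitionsOn ℓ T m | locate a P = k}.ncard := by
    rw [← Set.ncard_coe_finset, coe_filter]
    simp only [S, Set.Finite.mem_toFinset]
  have hcard : #(T.erase a) = #T - 1 := card_erase_of_mem haT
  rw [Set.ncard_eq_toFinset_card _ finite_partitionsOn,
    card_eq_sum_card_fiberwise fun P hP =>
      locate_mem_disjSum haT ((Set.Finite.mem_toFinset _).1 hP).1,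
    sum_disjSum]
  congr 1
  · rw [sum_congr rfl fun p hp => (hfiber _).trans (ncard_locate_eq_inl haT hmax hp), sum_const,
      smul_eq_mul, ncard_partitionsOn, hcard]
  · calc ∑ t ∈ nodupLists (T.erase a), #{P ∈ S | locate a P = .inr t}
        = ∑ t ∈ nodupLists (T.erase a),
            weightedLah (ℓ - (t.length : ℤ)) (#T - 1 - t.length) (m - 1) :=
          sum_congr rfl fun t ht => by
            obtain ⟨htnd, htT⟩ := mem_nodupLists.1 ht
            rw [hfiber, ncard_locate_eq_inr haT hmax hm htnd htT, ncard_partitionsOn,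
              card_sdiff_of_subset (fun x hx => htT x (List.mem_toFinset.1 hx)),
              List.toFinset_card_of_nodup htnd, hcard]
      _ = _ := by
          rw [sum_nodupLists (f := fun j => weightedLah (ℓ - (j : ℤ)) (#T - 1 - j) (m - 1)),
            hcard, Nat.sub_add_cancel (card_pos.2 ⟨a, haT⟩)]
          simp only [smul_eq_mul]

end WeightedLah

theorem weightedLah_recurrence (ℓ : ℤ) (n m : ℕ) (hn : 1 ≤ n) (hm : 1 ≤ m) :
    weightedLah ℓ n m =
      (n - 1) * weightedLah ℓ (n - 1) m +
        ∑ j ∈ Finset.range n,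
          (n - 1).choose j * j.factorial * weightedLah (ℓ - (j : ℤ)) (n - 1 - j) (m - 1) := by
  have h := WeightedLah.ncard_partitionsOn_eq (ℓ := ℓ) (mem_Icc.2 ⟨hn, le_rfl⟩)
    (fun x hx => (mem_Icc.1 hx).2) hm
  rwa [Nat.card_Icc, Nat.add_sub_cancel] at h
end
end

section
/- For all 2 ≤ m ≤ n and 0 ≤ ℓ ≤ n−m, one has W(ℓ,n,m) > (n−1)·W(ℓ,n−1,m). -/
/-!
Let `n = N + 1`. Inserting `n` directly after an element `j ∈ {1,…,N}` inside its block turns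
an ordered partition of `{1,…,N}` into one of `{1,…,n}` with the same number of blocks and the
same weight, since `n` never becomes the first element of a block. The map `(j, P) ↦ P'` is
injective: deleting `n` recovers `P`, and `j` is the element just before `n`. Its image misses
every partition having `[n]` as a block, and such a partition with `m` blocks and weight `ℓ`
exists because `m ≥ 2` and `ℓ ≤ n - m`: add `[n]` to a partition of `{1,…,N}` into `m - 1`
blocks of weight `ℓ`.
-/

noncomputable section

open Finset

namespace List

variable {α : Type*} [DecidableEq α] {j j' x y : α} {l : List α}

def insertAfter (j x : α) : List α → List α
  | [] => []
  | a :: l => if a = j then a :: x :: l else a :: insertAfter j x l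

@[simp] theorem insertAfter_nil : insertAfter j x [] = [] := rfl

theorem insertAfter_cons (a : α) (l : List α) :
    insertAfter j x (a :: l) = if a = j then a :: x :: l else a :: insertAfter j x l := rfl

theorem insertAfter_of_notMem : j ∉ l → insertAfter j x l = l := by
  induction l with
  | nil => simp
  | cons a l ih =>
    intro h
    rw [mem_cons, not_or] at h
    simp [insertAfter_cons, Ne.symm h.1, ih h.2]

theorem perm_insertAfter : j ∈ l → insertAfter j x l ~ x :: l := by
  induction l with
  | nil => simp
  | cons a l ih =>
    intro h
    rw [insertAfter_cons]
    split_ifs with ha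
    · exact .swap x a l
    · exact ((ih (by simpa [Ne.symm ha] using h)).cons a).trans (.swap x a l)

theorem mem_insertAfter : y ∈ insertAfter j x l ↔ y ∈ l ∨ y = x ∧ j ∈ l := by
  by_cases hj : j ∈ l
  · simp [(perm_insertAfter hj).mem_iff, hj, or_comm]
  · simp [insertAfter_of_notMem hj, hj]

theorem nodup_insertAfter (hx : x ∉ l) (hl : l.Nodup) : (insertAfter j x l).Nodup := by
  by_cases hj : j ∈ l
  · exact (perm_insertAfter hj).nodup_iff.2 (nodup_cons.2 ⟨hx, hl⟩)
  · rwa [insertAfter_of_notMem hj]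

theorem erase_insertAfter : x ∉ l → (insertAfter j x l).erase x = l := by
  induction l with
  | nil => simp
  | cons a l ih =>
    intro h
    rw [mem_cons, not_or] at h
    rw [insertAfter_cons]
    split_ifs <;> simp [Ne.symm h.1, ih h.2]

@[simp] theorem insertAfter_eq_nil_iff : insertAfter j x l = [] ↔ l = [] := by
  cases l with
  | nil => simp
  | cons a l => by_cases ha : a = j <;> simp [insertAfter_cons, ha]

theorem headI_insertAfter [Inhabited α] : (insertAfter j x l).headI = l.headI := by
  cases l with
  | nil => rfl
  | cons a l => by_cases ha : a = j <;> simp [insertAfter_cons, ha]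

theorem cons_ne_insertAfter (hx : x ∉ l) : x :: l ≠ insertAfter j x l := by
  cases l with
  | nil => simp
  | cons b l =>
    rw [mem_cons, not_or] at hx
    rw [insertAfter_cons]
    split_ifs <;> simp [hx.1]

theorem eq_of_insertAfter_eq (hx : x ∉ l) (hj : j ∈ l)
    (h : insertAfter j x l = insertAfter j' x l) : j = j' := by
  have hj' : j' ∈ l := by
    have hx' : x ∈ insertAfter j' x l := h ▸ mem_insertAfter.2 (.inr ⟨rfl, hj⟩)
    exact ((mem_insertAfter.1 hx').resolve_left hx).2
  induction l with
  | nil => simp at hj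
  | cons a l ih =>
    rw [mem_cons, not_or] at hx
    have hjl : a ≠ j → j ∈ l := fun ha => (mem_cons.1 hj).resolve_left (Ne.symm ha)
    have hj'l : a ≠ j' → j' ∈ l := fun ha' => (mem_cons.1 hj').resolve_left (Ne.symm ha')
    rcases eq_or_ne a j with rfl | ha <;> rcases eq_or_ne a j' with rfl | ha'
    · rfl
    · simp only [insertAfter_cons, if_pos, if_neg ha', cons.injEq, true_and] at h
      exact absurd h (cons_ne_insertAfter hx.2)
    · simp only [insertAfter_cons, if_pos, if_neg ha, cons.injEq, true_and] at h
      exact absurd h.symm (cons_ne_insertAfter hx.2)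
    · simp only [insertAfter_cons, if_neg ha, if_neg ha', cons.injEq, true_and] at h
      exact ih hx.2 (hjl ha) h (hj'l ha')

end List

theorem blockWeight_insertAfter {j x : ℕ} {b : List ℕ} (hx : b.headI ≤ x) :
    blockWeight (b.insertAfter j x) = blockWeight b := by
  by_cases hj : j ∈ b
  · rw [blockWeight, blockWeight, List.headI_insertAfter,
      ((List.perm_insertAfter hj).filter _).length_eq]
    simp [hx]
  · rw [List.insertAfter_of_notMem hj]

namespace IsOrderedPartition

variable {N j : ℕ} {P : Finset (List ℕ)} {b : List ℕ}

theorem mem_Icc (hP : IsOrderedPartition N P) (hb : b ∈ P) {x : ℕ} (hx : x ∈ b) :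
    x ∈ Icc 1 N :=
  (hP.2.2 x).1 ⟨b, hb, hx⟩

theorem succ_notMem (hP : IsOrderedPartition N P) (hb : b ∈ P) : N + 1 ∉ b := fun h => by
  simpa using hP.mem_Icc hb h

theorem headI_le (hP : IsOrderedPartition N P) (hb : b ∈ P) : b.headI ≤ N := by
  obtain ⟨a, t, rfl⟩ := List.exists_cons_of_ne_nil (hP.1 b hb).1
  exact (Finset.mem_Icc.1 (hP.mem_Icc hb List.mem_cons_self)).2

theorem injOn_insertAfter (hP : IsOrderedPartition N P) :
    Set.InjOn (List.insertAfter j (N + 1)) P := fun b hb b' hb' h => by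
  rw [← List.erase_insertAfter (hP.succ_notMem hb), h,
    List.erase_insertAfter (hP.succ_notMem hb')]

theorem image_insertAfter (hP : IsOrderedPartition N P) (hj : j ∈ Icc 1 N) :
    IsOrderedPartition (N + 1) (P.image (List.insertAfter j (N + 1))) := by
  refine ⟨?_, ?_, fun x => ?_⟩
  · simp only [mem_image, forall_exists_index, and_imp, forall_apply_eq_imp_iff₂]
    intro b hb
    exact ⟨by simpa using (hP.1 b hb).1,
      List.nodup_insertAfter (hP.succ_notMem hb) (hP.1 b hb).2⟩
  · simp only [mem_image, forall_exists_index, and_imp, forall_apply_eq_imp_iff₂]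
    intro b₁ hb₁ b₂ hb₂ hne x hx₁ hx₂
    have hb : b₁ ≠ b₂ := fun h => hne (h ▸ rfl)
    rw [List.mem_insertAfter] at hx₁ hx₂
    rcases hx₁ with hx₁ | ⟨rfl, hj₁⟩ <;> rcases hx₂ with hx₂ | ⟨hx, hj₂⟩
    · exact hP.2.1 b₁ hb₁ b₂ hb₂ hb x hx₁ hx₂
    · exact hP.succ_notMem hb₁ (hx ▸ hx₁)
    · exact hP.succ_notMem hb₂ hx₂
    · exact hP.2.1 b₁ hb₁ b₂ hb₂ hb j hj₁ hj₂
  · simp only [mem_image, exists_exists_and_eq_and, List.mem_insertAfter, Finset.mem_Icc]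
    constructor
    · rintro ⟨b, hb, hx | ⟨rfl, -⟩⟩
      · have := Finset.mem_Icc.1 (hP.mem_Icc hb hx)
        omega
      · omega
    · intro hx
      rcases Nat.lt_or_ge x (N + 1) with hxN | hxN
      · obtain ⟨b, hb, hxb⟩ := (hP.2.2 x).2 (Finset.mem_Icc.2 ⟨hx.1, by omega⟩)
        exact ⟨b, hb, .inl hxb⟩
      · obtain ⟨b, hb, hjb⟩ := (hP.2.2 j).2 hj
        exact ⟨b, hb, .inr ⟨by omega, hjb⟩⟩

theorem card_image_insertAfter (hP : IsOrderedPartition N P) :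
    (P.image (List.insertAfter j (N + 1))).card = P.card :=
  card_image_of_injOn hP.injOn_insertAfter

theorem partitionWeight_image_insertAfter (hP : IsOrderedPartition N P) :
    partitionWeight (P.image (List.insertAfter j (N + 1))) = partitionWeight P := by
  rw [partitionWeight, sum_image hP.injOn_insertAfter]
  exact sum_congr rfl fun b hb => blockWeight_insertAfter ((hP.headI_le hb).trans N.le_succ)

theorem image_erase_image_insertAfter (hP : IsOrderedPartition N P) :
    (P.image (List.insertAfter j (N + 1))).image (List.erase · (N + 1)) = P := by
  rw [image_image]
  exact (image_congr fun b hb => List.erase_insertAfter (hP.succ_notMem hb)).trans image_id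

theorem singleton_notMem_image_insertAfter (hP : IsOrderedPartition N P) :
    [N + 1] ∉ P.image (List.insertAfter j (N + 1)) := by
  simp only [mem_image, not_exists, not_and]
  intro b hb h
  have := List.erase_insertAfter (j := j) (hP.succ_notMem hb)
  rw [h, List.erase_cons_head] at this
  exact (hP.1 b hb).1 this.symm

theorem singleton_notMem (hP : IsOrderedPartition N P) : [N + 1] ∉ P := fun h =>
  hP.succ_notMem h (List.mem_singleton_self _)

theorem insert_singleton (hP : IsOrderedPartition N P) :
    IsOrderedPartition (N + 1) (insert [N + 1] P) := by
  refine ⟨?_, ?_, fun x => ?_⟩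
  · simp only [mem_insert, forall_eq_or_imp]
    exact ⟨by simp, hP.1⟩
  · simp only [mem_insert]
    rintro b₁ (rfl | hb₁) b₂ (rfl | hb₂) hne x hx₁ hx₂
    · exact hne rfl
    · exact hP.succ_notMem hb₂ (List.mem_singleton.1 hx₁ ▸ hx₂)
    · exact hP.succ_notMem hb₁ (List.mem_singleton.1 hx₂ ▸ hx₁)
    · exact hP.2.1 b₁ hb₁ b₂ hb₂ hne x hx₁ hx₂
  · simp only [mem_insert, exists_eq_or_imp, List.mem_singleton, hP.2.2 x, Finset.mem_Icc]
    omega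

theorem card_insert_singleton (hP : IsOrderedPartition N P) :
    (insert [N + 1] P).card = P.card + 1 :=
  card_insert_of_notMem hP.singleton_notMem

theorem partitionWeight_insert_singleton (hP : IsOrderedPartition N P) :
    partitionWeight (insert [N + 1] P) = partitionWeight P := by
  rw [partitionWeight, sum_insert hP.singleton_notMem]
  simp [blockWeight, partitionWeight]

end IsOrderedPartition

def orderedPartitions (n m ℓ : ℕ) : Set (Finset (List ℕ)) :=
  {P | IsOrderedPartition n P ∧ P.card = m ∧ partitionWeight P = ℓ}

theorem weightedLah_eq_ncard (ℓ n m : ℕ) :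
    weightedLah ℓ n m = (orderedPartitions n m ℓ).ncard := by
  simp only [weightedLah, orderedPartitions, Nat.cast_inj]

theorem finite_setOf_isOrderedPartition (N : ℕ) : {P | IsOrderedPartition N P}.Finite := by
  let blocks : Finset (List ℕ) := (Icc 1 N).powerset.biUnion fun s => s.val.lists.toFinset
  refine blocks.powerset.finite_toSet.subset fun P hP => ?_
  rw [mem_coe, mem_powerset]
  intro b hb
  simp only [blocks, mem_biUnion, mem_powerset, Multiset.mem_toFinset, Multiset.mem_lists_iff]
  refine ⟨b.toFinset, fun x hx => hP.mem_Icc hb (List.mem_toFinset.1 hx), ?_⟩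
  rw [List.toFinset_val, (hP.1 b hb).2.dedup]
  rfl

theorem finite_orderedPartitions (n m ℓ : ℕ) : (orderedPartitions n m ℓ).Finite :=
  (finite_setOf_isOrderedPartition n).subset fun _ hP => hP.1

section

variable {N m ℓ j : ℕ} {P : Finset (List ℕ)}

theorem image_insertAfter_mem_orderedPartitions (hP : P ∈ orderedPartitions N m ℓ)
    (hj : j ∈ Icc 1 N) :
    P.image (List.insertAfter j (N + 1)) ∈ orderedPartitions (N + 1) m ℓ :=
  ⟨hP.1.image_insertAfter hj, hP.1.card_image_insertAfter.trans hP.2.1,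
    hP.1.partitionWeight_image_insertAfter.trans hP.2.2⟩

theorem insert_singleton_mem_orderedPartitions (hP : P ∈ orderedPartitions N m ℓ) :
    insert [N + 1] P ∈ orderedPartitions (N + 1) (m + 1) ℓ :=
  ⟨hP.1.insert_singleton, hP.2.1 ▸ hP.1.card_insert_singleton,
    hP.1.partitionWeight_insert_singleton.trans hP.2.2⟩

theorem singleton_mem_orderedPartitions (ℓ : ℕ) :
    {(ℓ + 1) :: List.range' 1 ℓ} ∈ orderedPartitions (ℓ + 1) 1 ℓ := by
  refine ⟨⟨?_, ?_, fun x => ?_⟩, card_singleton _, ?_⟩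
  · simp [List.nodup_range']
    omega
  · simp
  · simp only [mem_singleton, exists_eq_left, List.mem_cons, List.mem_range'_1, Finset.mem_Icc]
    omega
  · rw [partitionWeight, sum_singleton, blockWeight, List.headI_cons,
      List.filter_cons_of_neg (by simp), List.filter_eq_self.2 (by simp +contextual; omega),
      List.length_range']

theorem orderedPartitions_nonempty {k : ℕ} (hk : 1 ≤ k) (h : ℓ + k ≤ N) :
    (orderedPartitions N k ℓ).Nonempty := by
  induction N generalizing k with
  | zero => omega
  | succ N ih =>
    obtain ⟨k, rfl⟩ : ∃ k', k = k' + 1 := ⟨k - 1, by omega⟩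
    rcases Nat.eq_zero_or_pos k with rfl | hk
    · rcases Nat.lt_or_ge ℓ N with hℓ | hℓ
      · obtain ⟨P, hP⟩ := ih le_rfl (by omega)
        exact ⟨_, image_insertAfter_mem_orderedPartitions hP
          (Finset.mem_Icc.2 ⟨by omega, le_rfl⟩)⟩
      · obtain rfl : ℓ = N := by omega
        exact ⟨_, singleton_mem_orderedPartitions ℓ⟩
    · obtain ⟨P, hP⟩ := ih hk (by omega)
      exact ⟨_, insert_singleton_mem_orderedPartitions hP⟩

theorem injOn_image_insertAfter :
    Set.InjOn (fun p : ℕ × Finset (List ℕ) => p.2.image (List.insertAfter p.1 (N + 1)))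
      ((Icc 1 N : Set ℕ) ×ˢ {P | IsOrderedPartition N P}) := by
  rintro ⟨j, P⟩ ⟨hj, hP⟩ ⟨j', P'⟩ ⟨-, hP'⟩ h
  dsimp only at h hP hP'
  obtain rfl : P = P' := by
    rw [← hP.image_erase_image_insertAfter (j := j), h, hP'.image_erase_image_insertAfter]
  obtain ⟨b, hb, hjb⟩ := (hP.2.2 j).2 hj
  obtain ⟨b', hb', hbb'⟩ : ∃ b' ∈ P, b'.insertAfter j' (N + 1) = b.insertAfter j (N + 1) :=
    mem_image.1 (h ▸ mem_image_of_mem _ hb)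
  obtain rfl : b' = b := by
    rw [← List.erase_insertAfter (hP.succ_notMem hb'), hbb',
      List.erase_insertAfter (hP.succ_notMem hb)]
  rw [List.eq_of_insertAfter_eq (hP.succ_notMem hb) hjb hbb'.symm]

end

theorem weightedLah_gt (n m ℓ : ℕ) (hm : 2 ≤ m) (hmn : m ≤ n) (hℓ : ℓ ≤ n - m) :
    (n - 1) * weightedLah (ℓ : ℤ) (n - 1) m < weightedLah (ℓ : ℤ) n m := by
  obtain ⟨N, rfl⟩ : ∃ N, n = N + 1 := ⟨n - 1, by omega⟩
  obtain ⟨Q, hQ⟩ :=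
    orderedPartitions_nonempty (N := N) (k := m - 1) (ℓ := ℓ) (by omega) (by omega)
  have hQ' : insert [N + 1] Q ∈ orderedPartitions (N + 1) m ℓ :=
    Nat.sub_add_cancel (by omega : 1 ≤ m) ▸ insert_singleton_mem_orderedPartitions hQ
  rw [Nat.add_sub_cancel, weightedLah_eq_ncard, weightedLah_eq_ncard]
  calc N * (orderedPartitions N m ℓ).ncard
      = ((Icc 1 N : Set ℕ) ×ˢ orderedPartitions N m ℓ).ncard := by
        rw [Set.ncard_prod, Set.ncard_coe_finset, Nat.card_Icc, Nat.add_sub_cancel]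
    _ ≤ (orderedPartitions (N + 1) m ℓ \ {insert [N + 1] Q}).ncard := by
        refine Set.ncard_le_ncard_of_injOn _ ?_
          (injOn_image_insertAfter.mono (Set.prod_mono le_rfl fun _ hP => hP.1))
          ((finite_orderedPartitions _ _ _).sdiff)
        rintro ⟨j, P⟩ ⟨hj, hP⟩
        refine ⟨image_insertAfter_mem_orderedPartitions hP hj, fun h => ?_⟩
        exact hP.1.singleton_notMem_image_insertAfter (h ▸ mem_insert_self _ _)
    _ < (orderedPartitions (N + 1) m ℓ).ncard :=
        Set.ncard_lt_ncard (Set.sdiff_singleton_ssubset.2 hQ') (finite_orderedPartitions _ _ _)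
end
end

section
/- The function t ↦ #{x ∈ {0,...,t}^n : Σ_{i=1}^n x_i ≤ kt} agrees with a polynomial in t for all integers t ≥ 0, for every 1 ≤ k ≤ n. -/
noncomputable section

open Finset

namespace EhrhartAux

lemma asc_prod (a d : ℕ) : (∏ i ∈ Finset.range d, (a + 1 + i)) = d.factorial * (a + d).choose d := by
  rw [← Nat.ascFactorial_eq_factorial_mul_choose]
  induction d with
  | zero => simp
  | succ d ih => rw [Finset.prod_range_succ, ih, Nat.ascFactorial_succ]; ring

lemma card_sum_le (d m : ℕ) :
    Nat.card {x : Fin d → ℕ // ∑ i, x i ≤ m} = (m + d).choose d := by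
  have e : {x : Fin d → ℕ // ∑ i, x i ≤ m} ≃ {P : Fin (d+1) → ℕ // ∑ i, P i = m} :=
  { toFun := fun x => ⟨Fin.cons (m - ∑ i, x.1 i) x.1, by
      have := x.2
      rw [Fin.sum_cons]; omega⟩
    invFun := fun P => ⟨fun i => P.1 i.succ, by
      have := P.2; rw [Fin.sum_univ_succ] at this
      show ∑ i : Fin d, P.1 i.succ ≤ m
      omega⟩
    left_inv := fun x => by ext i; simp
    right_inv := fun P => by
      ext i
      refine Fin.cases ?_ ?_ i
      · have := P.2; rw [Fin.sum_univ_succ] at this; simp; omega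
      · intro j; simp }
  rw [Nat.card_congr e, Nat.card_congr (Sym.equivNatSumOfFintype (Fin (d+1)) m).symm,
    Nat.card_eq_fintype_card, Sym.card_sym_eq_choose, Fintype.card_fin,
    show d + 1 + m - 1 = m + d by omega, Nat.choose_symm_add]

lemma indepCount_eq_natCount (k n t : ℕ) :
    indepCount k n t = Nat.card {x : Fin n → ℕ // (∑ i, x i ≤ k * t) ∧ ∀ i, x i ≤ t} := by
  apply Nat.card_congr
  refine ⟨fun x => ⟨fun i => (x.1 i).toNat, ?_, ?_⟩, fun y => ⟨fun i => (y.1 i : ℤ), ⟨?_, ?_⟩⟩, ?_, ?_⟩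
  · show ∑ i, (x.1 i).toNat ≤ k * t
    have h2 : ((∑ i, (x.1 i).toNat : ℕ) : ℤ) = ∑ i, x.1 i := by
      push_cast
      exact Finset.sum_congr rfl fun i _ => Int.toNat_of_nonneg (x.2.1 i).1
    have h3 := x.2.2
    have : ((∑ i, (x.1 i).toNat : ℕ) : ℤ) ≤ ((k * t : ℕ) : ℤ) := by
      rw [h2]; push_cast; exact h3
    exact_mod_cast this
  · intro i; show (x.1 i).toNat ≤ t; have := x.2.1 i; omega
  · intro i; show (0:ℤ) ≤ (y.1 i : ℤ) ∧ (y.1 i : ℤ) ≤ t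
    constructor
    · positivity
    · exact_mod_cast y.2.2 i
  · show ∑ i, (y.1 i : ℤ) ≤ (k:ℤ) * t
    have := y.2.1
    have h := Nat.cast_le (α := ℤ) |>.2 this
    push_cast at h ⊢
    exact h
  · intro x; ext i; exact Int.toNat_of_nonneg (x.2.1 i).1
  · intro y; ext i; simp

lemma natCard_eq_filter (n m : ℕ) (P : (Fin n → ℕ) → Prop) [DecidablePred P]
    (hP : ∀ x, P x → ∀ i, x i ≤ m) :
    Nat.card {x : Fin n → ℕ // P x}
      = ((Fintype.piFinset fun _ : Fin n => Finset.range (m+1)).filter P).card := by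
  rw [← Nat.card_eq_finsetCard]
  apply Nat.card_congr
  apply Equiv.subtypeEquivRight
  intro x
  simp only [Finset.mem_filter, Fintype.mem_piFinset, Finset.mem_range, Nat.lt_succ_iff]
  exact ⟨fun h => ⟨fun i => hP x h i, h⟩, fun h => h.2⟩

lemma sieve_card (n t : ℕ) (U : Finset (Fin n → ℕ)) :
    ((U.filter (fun x => ∀ i, x i ≤ t)).card : ℚ)
      = ∑ E ∈ (Finset.univ : Finset (Fin n)).powerset,
          (-1)^E.card * ((U.filter (fun x => ∀ i ∈ E, t+1 ≤ x i)).card : ℚ) := by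
  classical
  calc ((U.filter (fun x => ∀ i, x i ≤ t)).card : ℚ)
      = ∑ x ∈ U, if ∀ i, x i ≤ t then (1:ℚ) else 0 := (
        Finset.sum_boole _ _).symm
    _ = ∑ x ∈ U, ∏ i : Fin n, (-(if t+1 ≤ x i then (1:ℚ) else 0) + 1) := by
        refine Finset.sum_congr rfl fun x _ => ?_
        rw [show (fun i => (-(if t+1 ≤ x i then (1:ℚ) else 0) + 1))
            = fun i => (if x i ≤ t then (1:ℚ) else 0) from ?_]
        · rw [Finset.prod_boole]; simp
        · funext i; split_ifs with h1 h2 h2 <;> simp_all <;> omega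
    _ = ∑ x ∈ U, ∑ E ∈ (Finset.univ : Finset (Fin n)).powerset,
          (∏ i ∈ E, -(if t+1 ≤ x i then (1:ℚ) else 0)) * ∏ i ∈ Finset.univ \ E, 1 := by
        refine Finset.sum_congr rfl fun x _ => ?_
        rw [Finset.prod_add]
    _ = ∑ E ∈ (Finset.univ : Finset (Fin n)).powerset,
          (-1)^E.card * ((U.filter (fun x => ∀ i ∈ E, t+1 ≤ x i)).card : ℚ) := by
        rw [Finset.sum_comm]
        refine Finset.sum_congr rfl fun E _ => ?_
        rw [← Finset.sum_boole (fun x => ∀ i ∈ E, t+1 ≤ x i) U, Finset.mul_sum]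
        refine Finset.sum_congr rfl fun x _ => ?_
        rw [Finset.prod_congr rfl (fun i (_ : i ∈ E) =>
            show -(if t+1 ≤ x i then (1:ℚ) else 0) = (-1) * (if t+1 ≤ x i then (1:ℚ) else 0) by ring),
          Finset.prod_mul_distrib, Finset.prod_const, Finset.prod_boole]
        simp

lemma shift_card (n t k : ℕ) (E : Finset (Fin n)) :
    (((Fintype.piFinset fun _ : Fin n => Finset.range (k*t+1)).filter
        (fun x => (∑ i, x i ≤ k*t) ∧ ∀ i ∈ E, t+1 ≤ x i)).card : ℕ)
      = (((Fintype.piFinset fun _ : Fin n => Finset.range (k*t+1)).filter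
        (fun y => ∑ i, y i + E.card * (t+1) ≤ k*t)).card : ℕ) := by
  classical
  set c : Fin n → ℕ := fun i => if i ∈ E then t+1 else 0 with hc
  have hcapp : ∀ i, c i = if i ∈ E then t+1 else 0 := fun i => rfl
  have hcsum : ∑ i, c i = E.card * (t+1) := by
    rw [hc]
    rw [Finset.sum_ite_mem, Finset.univ_inter, Finset.sum_const, smul_eq_mul]
  apply Finset.card_bij' (fun x _ => fun i => x i - c i) (fun y _ => fun i => y i + c i)
  · intro x hx
    simp only [Finset.mem_filter, Fintype.mem_piFinset, Finset.mem_range, Nat.lt_succ_iff] at hx ⊢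
    obtain ⟨hb, hs, hE⟩ := hx
    have hle : ∀ i, c i ≤ x i := by
      intro i; rw [hcapp]; split_ifs with h
      · exact hE i h
      · exact Nat.zero_le _
    have hsub : ∑ i, (x i - c i) = ∑ i, x i - ∑ i, c i :=
      Finset.sum_tsub_distrib _ (fun i _ => hle i)
    have hcs : ∑ i, c i ≤ ∑ i, x i := Finset.sum_le_sum (fun i _ => hle i)
    refine ⟨fun i => le_trans (Nat.sub_le _ _) (hb i), ?_⟩
    show ∑ i, (x i - c i) + E.card * (t+1) ≤ k * t
    rw [hsub, hcsum] at *
    omega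
  · intro y hy
    simp only [Finset.mem_filter, Fintype.mem_piFinset, Finset.mem_range, Nat.lt_succ_iff] at hy ⊢
    obtain ⟨hb, hs⟩ := hy
    have hsum : ∑ i, (y i + c i) = ∑ i, y i + E.card * (t+1) := by
      rw [Finset.sum_add_distrib, hcsum]
    have hyi : ∀ i, y i ≤ ∑ j, y j := fun i =>
      Finset.single_le_sum (f := y) (fun j _ => Nat.zero_le _) (Finset.mem_univ i)
    refine ⟨?_, by rw [hsum]; exact hs, ?_⟩
    · intro i
      rw [hcapp]; split_ifs with h
      · have h1 : 1 ≤ E.card := Finset.card_pos.mpr ⟨i, h⟩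
        have := hyi i
        nlinarith
      · simpa using le_trans (hyi i) (by omega)
    · intro i hi
      show t + 1 ≤ y i + c i
      rw [hcapp]; simp [hi]
  · intro x hx
    simp only [Finset.mem_filter] at hx
    funext i
    show (x i - c i) + c i = x i
    have : c i ≤ x i := by
      rw [hcapp]; split_ifs with h
      · exact hx.2.2 i h
      · exact Nat.zero_le _
    omega
  · intro y _; funext i
    show (y i + c i) - c i = y i
    omega

/-- The truncated count `N j`. -/
def N (k n t j : ℕ) : ℚ :=
  if j*(t+1) ≤ k*t then ((k*t - j*(t+1) + n).choose n : ℚ) else 0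

lemma shifted_count_eq (k n t j : ℕ) :
    (((Fintype.piFinset fun _ : Fin n => Finset.range (k*t+1)).filter
        (fun y => ∑ i, y i + j * (t+1) ≤ k*t)).card : ℚ) = N k n t j := by
  classical
  rw [← natCard_eq_filter n (k*t) (fun y => ∑ i, y i + j * (t+1) ≤ k*t)
    (fun y hy i => le_trans (Finset.single_le_sum (f := y) (fun l _ => Nat.zero_le _)
      (Finset.mem_univ i)) (by omega))]
  unfold N
  split_ifs with h
  · rw [Nat.card_congr (Equiv.subtypeEquivRight (q := fun y : Fin n → ℕ => ∑ i, y i ≤ k*t - j*(t+1))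
      (fun y => by omega)), card_sum_le]
  · have : IsEmpty {y : Fin n → ℕ // ∑ i, y i + j * (t+1) ≤ k*t} := ⟨fun y => by
      have := y.2; omega⟩
    rw [Nat.card_of_isEmpty]
    simp

lemma N_zero_of_gt (k n t j : ℕ) (hk : 1 ≤ k) (hj : k ≤ j) : N k n t j = 0 := by
  unfold N
  rw [if_neg]
  have : k * (t+1) ≤ j * (t+1) := Nat.mul_le_mul_right _ hj
  have hkt : k * (t+1) = k * t + k := by ring
  omega

/-- The main counting identity. -/
lemma count_eq_sum (k n t : ℕ) (hk : 1 ≤ k) (hkn : k ≤ n) :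
    (indepCount k n t : ℚ)
      = ∑ j ∈ Finset.range (k+1), (-1)^j * (n.choose j : ℚ) * N k n t j := by
  classical
  set U : Finset (Fin n → ℕ) :=
    (Fintype.piFinset fun _ : Fin n => Finset.range (k*t+1)).filter (fun x => ∑ i, x i ≤ k*t)
    with hU
  have h1 : indepCount k n t = (U.filter (fun x => ∀ i, x i ≤ t)).card := by
    rw [indepCount_eq_natCount, hU, Finset.filter_filter]
    exact natCard_eq_filter n (k*t) _ (fun x hx i =>
      le_trans (Finset.single_le_sum (f := x) (fun l _ => Nat.zero_le _) (Finset.mem_univ i)) hx.1)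
  rw [h1, sieve_card]
  have h2 : ∀ E ∈ (Finset.univ : Finset (Fin n)).powerset,
      ((U.filter (fun x => ∀ i ∈ E, t+1 ≤ x i)).card : ℚ) = N k n t E.card := by
    intro E _
    rw [hU, Finset.filter_filter]
    rw [show (((Fintype.piFinset fun _ : Fin n => Finset.range (k*t+1)).filter
        (fun x => (∑ i, x i ≤ k*t) ∧ ∀ i ∈ E, t+1 ≤ x i)).card : ℕ)
      = (((Fintype.piFinset fun _ : Fin n => Finset.range (k*t+1)).filter
        (fun y => ∑ i, y i + E.card * (t+1) ≤ k*t)).card : ℕ) from shift_card n t k E]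
    exact shifted_count_eq k n t E.card
  rw [Finset.sum_congr rfl (fun E hE => by rw [h2 E hE])]
  clear h1 h2
  clear hU
  clear U
  -- group by cardinality
  have hsub : ∑ j ∈ Finset.range (k+1), (n.choose j) • ((-1:ℚ)^j * N k n t j)
      = ∑ j ∈ Finset.range (n+1), (n.choose j) • ((-1:ℚ)^j * N k n t j) := by
    apply Finset.sum_subset (Finset.range_subset_range.mpr (by omega))
    intro j _ hj
    simp only [Finset.mem_range] at hj
    rw [N_zero_of_gt k n t j hk (by omega)]
    simp
  rw [show (∑ E ∈ (Finset.univ : Finset (Fin n)).powerset, (-1)^E.card * (N k n t E.card))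
      = ∑ E ∈ (Finset.univ : Finset (Fin n)).powerset,
          (fun j => (-1)^j * (N k n t j)) E.card from rfl]
  have hgroup := Finset.sum_powerset_apply_card (α := ℚ)
    (f := fun j => (-1)^j * N k n t j) (x := (Finset.univ : Finset (Fin n)))
  simp only [Finset.card_univ, Fintype.card_fin] at hgroup
  rw [hgroup, ← hsub]
  refine Finset.sum_congr rfl (fun j _ => ?_)
  rw [nsmul_eq_mul]
  ring

lemma poly_eval (k n t j : ℕ) (hk : 1 ≤ k) (hkn : k ≤ n) (hj : j ≤ k) :
    (n.factorial : ℚ)⁻¹ * ∏ i ∈ Finset.range n, (((k:ℚ) - j) * t + ((i:ℚ) + 1 - j))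
      = N k n t j := by
  by_cases h : j*(t+1) ≤ k*t
  · set a := k*t - j*(t+1) with ha
    have hcast : (a:ℚ) = (k:ℚ)*t - (j:ℚ)*((t:ℚ)+1) := by
      rw [ha, Nat.cast_sub h]
      push_cast
      ring
    have hterm : ∀ i ∈ Finset.range n, ((k:ℚ) - j) * t + ((i:ℚ) + 1 - j) = ((a + 1 + i : ℕ) : ℚ) := by
      intro i _
      push_cast
      rw [hcast]
      ring
    rw [Finset.prod_congr rfl hterm, ← Nat.cast_prod, asc_prod a n]
    unfold N
    rw [if_pos h]
    have hfac : (n.factorial : ℚ) ≠ 0 := by exact_mod_cast n.factorial_ne_zero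
    push_cast
    rw [← ha]
    field_simp
  · have hj1 : 1 ≤ j := by
      rcases Nat.eq_zero_or_pos j with rfl | h'
      · simp at h
      · exact h'
    have hCkj : (k-j)*t = k*t - j*t := by rw [Nat.sub_mul]
    have hjt : j*t ≤ k*t := Nat.mul_le_mul_right t hj
    have hexp : j*(t+1) = j*t + j := by ring
    have hC : (k-j)*t < j := by omega
    set i0 := j - 1 - (k-j)*t with hi0
    have hi0mem : i0 ∈ Finset.range n := by
      rw [Finset.mem_range]
      omega
    unfold N
    rw [if_neg h]
    rw [Finset.prod_eq_zero hi0mem ?_, mul_zero]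
    have e1 : (((k-j)*t : ℕ):ℚ) = ((k:ℚ)-j)*t := by
      push_cast [Nat.cast_sub hj]
      ring
    have e2 : ((i0:ℕ):ℚ) = (j:ℚ) - 1 - ((k:ℚ)-j)*(t:ℚ) := by
      rw [hi0, Nat.cast_sub (by omega : (k-j)*t ≤ j - 1), Nat.cast_sub hj1, e1]
      push_cast
      ring
    rw [e2]
    ring

end EhrhartAux

open EhrhartAux in
theorem indep_uniform_ehrhart_poly (k n : ℕ) (hk : 1 ≤ k) (hkn : k ≤ n) :
    ∃ p : Polynomial ℚ, ∀ t : ℕ, (indepCount k n t : ℚ) = p.eval (t : ℚ) := by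
    refine ⟨∑ j ∈ Finset.range (k+1),
      Polynomial.C ((-1:ℚ)^j * (n.choose j : ℚ) * (n.factorial:ℚ)⁻¹) *
        ∏ i ∈ Finset.range n,
          (Polynomial.C ((k:ℚ) - (j:ℚ)) * Polynomial.X + Polynomial.C ((i:ℚ) + 1 - (j:ℚ))),
      fun t => ?_⟩
    rw [count_eq_sum k n t hk hkn, Polynomial.eval_finset_sum]
    refine Finset.sum_congr rfl (fun j hj => ?_)
    rw [Polynomial.eval_mul, Polynomial.eval_C, Polynomial.eval_prod]
    simp only [Polynomial.eval_add, Polynomial.eval_mul, Polynomial.eval_C, Polynomial.eval_X]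
    rw [← poly_eval k n t j hk hkn (by simpa [Nat.lt_succ_iff] using hj)]
    ring
end
end

section
/- Let M be a matroid of rank k on {1,...,n}. If v = (e_{I₁}, k−rk(I₁)) and w = (e_{I₂}, k−rk(I₂)) are adjacent vertices of the lifted independence polytope ~P_I(M) ⊆ ℝ^{n+1}, then v − w is parallel to a vector of the form e_i − e_j (with i, j ∈ {1,...,n+1}); that is, ~P_I(M) is a generalized permutohedron. -/
noncomputable section

open Finset

/-- The 0/1 indicator vector of a subset `I` of `{1,…,n}`. -/
def indicator {n : ℕ} (I : Finset (Fin n)) : Fin n → ℝ := fun i => if i ∈ I then 1 else 0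

/-- The independence polytope of a matroid `M`. -/
def indepPolytope {n : ℕ} (M : Matroid (Fin n)) : Set (Fin n → ℝ) :=
  convexHull ℝ {x | ∃ I : Finset (Fin n), M.Indep ↑I ∧ x = indicator I}

/-- The lifted independence polytope of a matroid `M` of rank `k`. -/
def liftedIndepPolytope {n : ℕ} (M : Matroid (Fin n)) (k : ℕ) : Set (Fin (n + 1) → ℝ) :=
  convexHull ℝ
    {y | ∃ I : Finset (Fin n), M.Indep ↑I ∧ y = Fin.snoc (indicator I) ((k : ℝ) - I.card)}

/-!
A continuous linear functional `l` exposing the edge `[v, w]` evaluates the lifted vertex of `J` to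
a constant plus the weight `∑ a ∈ J, g a`, where `g a = l (e_a - e_{n+1})`; so `I₁` and `I₂` are
exactly the independent sets of maximum `g`-weight. Matroid augmentation then shows that they
differ by adding one element or by exchanging one element. If `|I₂| < |I₁|`, augment `I₂` from `I₁`
by some `a`; comparing `I₂` with `I₂ + a` and `I₁` with `I₁ - a` gives `g a = 0`, so `I₂ + a` is
another maximum-weight set and equals `I₁`. Otherwise, removing from `I₁` the lightest element `m`
of `I₁ ∆ I₂` (by symmetry `m ∈ I₁`) and augmenting from `I₂` gives a set at least as heavy as `I₁`, which must be `I₂`. In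
each case the difference of the lifted vertices is some `e_i - e_j`.
-/

open scoped symmDiff

section MaxWeight

variable {α β : Type*} [AddCommGroup β] [LinearOrder β]

structure Matroid.IsMaxWeightPair (M : Matroid α) (g : α → β) (μ : β) (I₁ I₂ : Finset α) :
    Prop where
  indep_left : M.Indep I₁
  indep_right : M.Indep I₂
  weight_le : ∀ J : Finset α, M.Indep J → ∑ a ∈ J, g a ≤ μ
  weight_eq_iff : ∀ J : Finset α, M.Indep J → (∑ a ∈ J, g a = μ ↔ J = I₁ ∨ J = I₂)

namespace Matroid.IsMaxWeightPair

variable {M : Matroid α} {g : α → β} {μ : β} {I₁ I₂ : Finset α}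

lemma symm (h : M.IsMaxWeightPair g μ I₁ I₂) : M.IsMaxWeightPair g μ I₂ I₁ where
  indep_left := h.indep_right
  indep_right := h.indep_left
  weight_le := h.weight_le
  weight_eq_iff J hJ := (h.weight_eq_iff J hJ).trans or_comm

lemma weight_left (h : M.IsMaxWeightPair g μ I₁ I₂) : ∑ a ∈ I₁, g a = μ :=
  (h.weight_eq_iff I₁ h.indep_left).2 (.inl rfl)

variable [DecidableEq α] [IsOrderedAddMonoid β]

lemma nonneg_of_mem (h : M.IsMaxWeightPair g μ I₁ I₂) {a : α} (ha : a ∈ I₁) : 0 ≤ g a := by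
  have hle := h.weight_le (I₁.erase a) (h.indep_left.subset (by simp))
  rw [← h.weight_left, ← add_sum_erase I₁ g ha] at hle
  simpa using hle

lemma exists_insert_eq_of_card_lt (h : M.IsMaxWeightPair g μ I₁ I₂) (hcard : I₂.card < I₁.card) :
    ∃ a ∉ I₂, I₁ = insert a I₂ := by
  obtain ⟨a, ha₁, ha₂, hind⟩ := h.indep_right.augment_finset h.indep_left hcard
  rw [← coe_insert] at hind
  have hweight : ∑ b ∈ insert a I₂, g b = g a + μ := by rw [sum_insert ha₂, h.symm.weight_left]
  have hga : g a = 0 :=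
    le_antisymm (by simpa [hweight] using h.weight_le _ hind) (h.nonneg_of_mem ha₁)
  rcases (h.weight_eq_iff _ hind).1 (by rw [hweight, hga, zero_add]) with hI₁ | hI₂
  · exact ⟨a, ha₂, hI₁.symm⟩
  · exact absurd (hI₂ ▸ mem_insert_self a I₂) ha₂

lemma exists_insert_erase_eq (h : M.IsMaxWeightPair g μ I₁ I₂) {m : α} (hm₁ : m ∈ I₁)
    (hm₂ : m ∉ I₂) (hmin : ∀ b ∈ I₂, b ∉ I₁ → g m ≤ g b) (hcard : I₁.card ≤ I₂.card) :
    ∃ b ∉ I₁, I₂ = insert b (I₁.erase m) := by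
  have hindep : M.Indep ↑(I₁.erase m) := h.indep_left.subset (by simp)
  obtain ⟨b, hb₂, hbm, hind⟩ :=
    hindep.augment_finset h.indep_right ((card_erase_lt_of_mem hm₁).trans_le hcard)
  rw [← coe_insert] at hind
  have hb₁ : b ∉ I₁ := fun hb₁ ↦ hbm (mem_erase.2 ⟨fun hbm ↦ hm₂ (hbm ▸ hb₂), hb₁⟩)
  have hweight : ∑ a ∈ insert b (I₁.erase m), g a = μ := by
    refine le_antisymm (h.weight_le _ hind) ?_
    rw [sum_insert hbm, ← h.weight_left, ← add_sum_erase I₁ g hm₁]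
    gcongr
    exact hmin b hb₂ hb₁
  rcases (h.weight_eq_iff _ hind).1 hweight with hI₁ | hI₂
  · exact absurd (hI₁ ▸ mem_insert_self b _) hb₁
  · exact ⟨b, hb₁, hI₂.symm⟩

lemma eq_insert_or_exchange_of_isMin (h : M.IsMaxWeightPair g μ I₁ I₂) {m : α} (hm₁ : m ∈ I₁)
    (hm₂ : m ∉ I₂) (hmin : ∀ b ∈ I₂, b ∉ I₁ → g m ≤ g b) :
    (∃ a ∉ I₂, I₁ = insert a I₂) ∨
      ∃ J a b, a ∉ J ∧ b ∉ J ∧ I₁ = insert a J ∧ I₂ = insert b J := by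
  rcases lt_or_ge I₂.card I₁.card with hcard | hcard
  · exact .inl (h.exists_insert_eq_of_card_lt hcard)
  · obtain ⟨b, hb₁, rfl⟩ := h.exists_insert_erase_eq hm₁ hm₂ hmin hcard
    exact .inr ⟨I₁.erase m, m, b, notMem_erase m I₁, fun hb ↦ hb₁ (mem_of_mem_erase hb),
      (insert_erase hm₁).symm, rfl⟩

lemma eq_insert_or_exchange (h : M.IsMaxWeightPair g μ I₁ I₂) (hne : I₁ ≠ I₂) :
    (∃ a ∉ I₂, I₁ = insert a I₂) ∨ (∃ b ∉ I₁, I₂ = insert b I₁) ∨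
      ∃ J a b, a ∉ J ∧ b ∉ J ∧ I₁ = insert a J ∧ I₂ = insert b J := by
  obtain ⟨m, hm, hmin⟩ := (I₁ ∆ I₂).exists_min_image g (symmDiff_nonempty.2 hne)
  rcases mem_symmDiff.1 hm with ⟨hm₁, hm₂⟩ | ⟨hm₂, hm₁⟩
  · rcases h.eq_insert_or_exchange_of_isMin hm₁ hm₂
      (fun b hb₂ hb₁ ↦ hmin b (mem_symmDiff.2 (.inr ⟨hb₂, hb₁⟩))) with h₁ | ⟨J, a, b, h⟩
    · exact .inl h₁
    · exact .inr (.inr ⟨J, a, b, h⟩)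
  · rcases h.symm.eq_insert_or_exchange_of_isMin hm₂ hm₁
      (fun a ha₁ ha₂ ↦ hmin a (mem_symmDiff.2 (.inl ⟨ha₁, ha₂⟩))) with
      h₂ | ⟨J, b, a, hb, ha, h₂, h₁⟩
    · exact .inr (.inl h₂)
    · exact .inr (.inr ⟨J, a, b, ha, hb, h₁, h₂⟩)

end Matroid.IsMaxWeightPair

end MaxWeight

lemma eq_or_eq_of_mem_segment_of_apply {𝕜 ι : Type*} [Field 𝕜] [PartialOrder 𝕜] {x y z : ι → 𝕜}
    (hz : z ∈ segment 𝕜 x y) {i : ι} (hxy : x i ≠ y i) (hzi : z i = x i ∨ z i = y i) :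
    z = x ∨ z = y := by
  obtain ⟨a, b, -, -, hab, rfl⟩ := hz
  obtain rfl : a = 1 - b := eq_sub_of_add_eq hab
  simp only [Pi.add_apply, Pi.smul_apply, smul_eq_mul] at hzi
  have hd : y i - x i ≠ 0 := sub_ne_zero.2 hxy.symm
  rcases hzi with h | h
  · obtain rfl : b = 0 := mul_right_cancel₀ hd (by linear_combination h)
    simp
  · obtain rfl : b = 1 := mul_right_cancel₀ hd (by linear_combination h)
    simp

section Lifted

variable {n : ℕ}

def liftedIndicator (k : ℕ) (I : Finset (Fin n)) : Fin (n + 1) → ℝ :=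
  Fin.snoc (indicator I) ((k : ℝ) - I.card)

@[simp]
lemma liftedIndicator_castSucc (k : ℕ) (I : Finset (Fin n)) (i : Fin n) :
    liftedIndicator k I i.castSucc = if i ∈ I then 1 else 0 := by
  simp [liftedIndicator, indicator]

@[simp]
lemma liftedIndicator_last (k : ℕ) (I : Finset (Fin n)) :
    liftedIndicator k I (Fin.last n) = k - I.card := by
  simp [liftedIndicator]

lemma liftedIndicator_injective (k : ℕ) : Function.Injective (liftedIndicator (n := n) k) := by
  intro I J h
  ext i
  have hi := congrFun h i.castSucc
  simp only [liftedIndicator_castSucc] at hi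
  split_ifs at hi <;> simp_all

lemma liftedIndicator_insert (k : ℕ) {I : Finset (Fin n)} {a : Fin n} (ha : a ∉ I) :
    liftedIndicator k (insert a I) =
      liftedIndicator k I + (Pi.single a.castSucc 1 - Pi.single (Fin.last n) 1) := by
  funext j
  induction j using Fin.lastCases with
  | last =>
    simp [card_insert_of_notMem ha, (Fin.castSucc_lt_last a).ne']
    ring
  | cast i =>
    rcases eq_or_ne i a with rfl | hia
    · simp [ha]
    · simp [hia, (Fin.castSucc_lt_last i).ne]

lemma liftedIndicator_eq_add_sum (k : ℕ) (I : Finset (Fin n)) :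
    liftedIndicator k I = liftedIndicator k ∅ +
      ∑ a ∈ I, (Pi.single a.castSucc 1 - Pi.single (Fin.last n) 1) := by
  induction I using Finset.induction_on with
  | empty => simp
  | insert a I ha ih =>
    rw [liftedIndicator_insert k ha, sum_insert ha, ih, add_assoc, add_comm (_ - _)]

lemma liftedIndicator_mem_segment_iff (k : ℕ) {I₁ I₂ J : Finset (Fin n)} :
    liftedIndicator k J ∈ segment ℝ (liftedIndicator k I₁) (liftedIndicator k I₂) ↔
      J = I₁ ∨ J = I₂ := by
  refine ⟨fun hJ ↦ ?_, ?_⟩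
  · obtain rfl | hne := eq_or_ne I₁ I₂
    · rw [segment_same, Set.mem_singleton_iff] at hJ
      exact .inl (liftedIndicator_injective k hJ)
    obtain ⟨i, hi⟩ : ∃ i, ¬(i ∈ I₁ ↔ i ∈ I₂) := by
      by_contra! h
      exact hne (Finset.ext h)
    refine (eq_or_eq_of_mem_segment_of_apply hJ (i := i.castSucc) ?_ ?_).imp
      (liftedIndicator_injective k ·) (liftedIndicator_injective k ·)
    · by_cases h₁ : i ∈ I₁ <;> by_cases h₂ : i ∈ I₂ <;> simp_all
    · by_cases h₁ : i ∈ I₁ <;> by_cases h₂ : i ∈ I₂ <;> by_cases h : i ∈ J <;> simp_all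
  · rintro (rfl | rfl)
    exacts [left_mem_segment ℝ _ _, right_mem_segment ℝ _ _]

lemma exists_isMaxWeightPair_of_isExposed {M : Matroid (Fin n)} {k : ℕ} {I₁ I₂ : Finset (Fin n)}
    (hI₁ : M.Indep I₁) (hI₂ : M.Indep I₂)
    (hexp : IsExposed ℝ (liftedIndepPolytope M k)
      (segment ℝ (liftedIndicator k I₁) (liftedIndicator k I₂))) :
    ∃ (g : Fin n → ℝ) (μ : ℝ), M.IsMaxWeightPair g μ I₁ I₂ := by
  obtain ⟨l, hl⟩ := hexp ⟨_, left_mem_segment ℝ _ _⟩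
  have hweight (J : Finset (Fin n)) : l (liftedIndicator k J) = l (liftedIndicator k ∅) +
      ∑ a ∈ J, l (Pi.single a.castSucc 1 - Pi.single (Fin.last n) 1) := by
    rw [liftedIndicator_eq_add_sum k J, map_add, map_sum]
  have hmem {J : Finset (Fin n)} (hJ : M.Indep J) :
      liftedIndicator k J ∈ liftedIndepPolytope M k :=
    subset_convexHull ℝ _ ⟨J, hJ, rfl⟩
  have hmax := hl ▸ left_mem_segment ℝ (liftedIndicator k I₁) (liftedIndicator k I₂)
  refine ⟨fun a ↦ l (Pi.single a.castSucc 1 - Pi.single (Fin.last n) 1),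
    l (liftedIndicator k I₁) - l (liftedIndicator k ∅), hI₁, hI₂, fun J hJ ↦ ?_,
    fun J hJ ↦ ?_⟩
  · linarith [hmax.2 _ (hmem hJ), hweight J]
  · rw [← liftedIndicator_mem_segment_iff k, hl]
    refine ⟨fun h ↦ ⟨hmem hJ, fun y hy ↦ ?_⟩, fun h ↦ ?_⟩
    · linarith [hmax.2 y hy, hweight J]
    · linarith [hmax.2 _ (hmem hJ), h.2 _ hmax.1, hweight J]

end Lifted

theorem lifted_indep_generalized_permutohedron_general (n k : ℕ) (M : Matroid (Fin n))
    (v w : Fin (n + 1) → ℝ)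
    (hv : ∃ I₁ : Finset (Fin n), M.Indep ↑I₁ ∧
      v = Fin.snoc (indicator I₁) ((k : ℝ) - I₁.card))
    (hw : ∃ I₂ : Finset (Fin n), M.Indep ↑I₂ ∧
      w = Fin.snoc (indicator I₂) ((k : ℝ) - I₂.card))
    (hvw : v ≠ w)
    (hedge : IsExposed ℝ (liftedIndepPolytope M k) (segment ℝ v w)) :
    ∃ (i j : Fin (n + 1)) (c : ℝ), i ≠ j ∧
      v - w = c • (Pi.single i (1 : ℝ) - Pi.single j (1 : ℝ)) := by
  obtain ⟨I₁, hI₁, rfl⟩ := hv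
  obtain ⟨I₂, hI₂, rfl⟩ := hw
  obtain ⟨g, μ, hmax⟩ := exists_isMaxWeightPair_of_isExposed hI₁ hI₂ hedge
  have hne : I₁ ≠ I₂ := by rintro rfl; exact hvw rfl
  change ∃ i j c, i ≠ j ∧ liftedIndicator k I₁ - liftedIndicator k I₂ = _
  rcases hmax.eq_insert_or_exchange hne with
    ⟨a, ha, rfl⟩ | ⟨b, hb, rfl⟩ | ⟨J, a, b, ha, hb, rfl, rfl⟩
  · refine ⟨a.castSucc, Fin.last n, 1, (Fin.castSucc_lt_last a).ne, ?_⟩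
    rw [one_smul, liftedIndicator_insert k ha]
    abel
  · refine ⟨Fin.last n, b.castSucc, 1, (Fin.castSucc_lt_last b).ne', ?_⟩
    rw [one_smul, liftedIndicator_insert k hb]
    abel
  · have hab : a ≠ b := by rintro rfl; exact hne rfl
    refine ⟨a.castSucc, b.castSucc, 1, Fin.castSucc_injective n |>.ne hab, ?_⟩
    rw [one_smul, liftedIndicator_insert k ha, liftedIndicator_insert k hb]
    abel

theorem lifted_indep_generalized_permutohedron (n k : ℕ) (M : Matroid (Fin n))
    (hE : M.E = Set.univ) (hrk : ∀ B, M.IsBase B → B.ncard = k)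
    (v w : Fin (n + 1) → ℝ)
    (hv : ∃ I₁ : Finset (Fin n), M.Indep ↑I₁ ∧
      v = Fin.snoc (indicator I₁) ((k : ℝ) - I₁.card))
    (hw : ∃ I₂ : Finset (Fin n), M.Indep ↑I₂ ∧
      w = Fin.snoc (indicator I₂) ((k : ℝ) - I₂.card))
    (hvw : v ≠ w)
    (hedge : IsExposed ℝ (liftedIndepPolytope M k) (segment ℝ v w)) :
    ∃ (i j : Fin (n + 1)) (c : ℝ), i ≠ j ∧
      v - w = c • (Pi.single i (1 : ℝ) - Pi.single j (1 : ℝ)) :=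
  lifted_indep_generalized_permutohedron_general n k M v w hv hw hvw hedge
end
end

section
/- For 1 < k < n−1 and integers t ≥ 1, #(tΔ'_{k,n} ∩ ℤ^{n-1}) = #{x ∈ {0,...,t}^{n-1} : (k−1)t < Σ x_i ≤ kt}, and this equals #{x ∈ {0,...,t}^{n} : Σ x_i = kt} − #{x ∈ {0,...,t}^{n-1} : Σ x_i = (k−1)t}. -/
noncomputable section

open Finset Pointwise

/-- The half-open hypersimplex `Δ'_{k,n} ⊆ ℝ^{n-1}` for `k > 1`. -/
def halfOpenSimplexReal (k n : ℕ) : Set (Fin (n - 1) → ℝ) :=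
  {x | (∀ i, 0 ≤ x i ∧ x i ≤ 1) ∧ (k : ℝ) - 1 < ∑ i, x i ∧ ∑ i, x i ≤ (k : ℝ)}


lemma box_finite (m t : ℕ) (s : Set (Fin m → ℤ))
    (hs : ∀ x ∈ s, ∀ i, 0 ≤ x i ∧ x i ≤ (t:ℤ)) : s.Finite := by
  apply Set.Finite.subset (Set.Finite.pi (fun i : Fin m => Set.finite_Icc (0:ℤ) t))
  intro x hx
  simp only [Set.mem_pi, Set.mem_univ, Set.mem_Icc, forall_true_left]
  exact fun i => hs x hx i

def snocEquiv (m t : ℕ) (c : ℤ) :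
    {x : Fin (m+1) → ℤ // (∀ i, 0 ≤ x i ∧ x i ≤ (t:ℤ)) ∧ ∑ i, x i = c} ≃
    {y : Fin m → ℤ // (∀ i, 0 ≤ y i ∧ y i ≤ (t:ℤ)) ∧ (c - t ≤ ∑ i, y i ∧ ∑ i, y i ≤ c)} where
  toFun x := ⟨Fin.init x.1, by
    obtain ⟨hb, hs⟩ := x.2
    rw [Fin.sum_univ_castSucc] at hs
    have h1 := hb (Fin.last m)
    refine ⟨fun i => hb i.castSucc, ?_, ?_⟩ <;> simp only [Fin.init] <;> linarith [h1.1, h1.2]⟩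
  invFun y := ⟨Fin.snoc y.1 (c - ∑ i, y.1 i), by
    obtain ⟨hb, h1, h2⟩ := y.2
    refine ⟨fun i => ?_, ?_⟩
    · refine Fin.lastCases ?_ (fun j => ?_) i
      · simp only [Fin.snoc_last]; constructor <;> linarith
      · simp only [Fin.snoc_castSucc]; exact hb j
    · rw [Fin.sum_univ_castSucc]
      simp only [Fin.snoc_castSucc, Fin.snoc_last]
      ring⟩
  left_inv x := by
    obtain ⟨hb, hs⟩ := x.2
    apply Subtype.ext
    have h : c - ∑ i, Fin.init x.1 i = x.1 (Fin.last m) := by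
      rw [Fin.sum_univ_castSucc] at hs
      simp only [Fin.init]
      linarith
    simp only [h, Fin.snoc_init_self]
  right_inv y := by
    apply Subtype.ext
    simp only [Fin.init_snoc]

lemma hyper_split (m k t : ℕ) (hk : 1 ≤ k) :
    hyperCount k (m+1) t = halfOpenCount k (m+1) t + hyperCount (k-1) m t := by
  have hsnoc := Nat.card_congr (snocEquiv m t ((k:ℤ) * t))
  rw [hyperCount, hsnoc]
  have hcast : ((k - 1 : ℕ) : ℤ) = (k:ℤ) - 1 := by push_cast [hk]; ring
  set B' : Set (Fin m → ℤ) := {y | (∀ i, 0 ≤ y i ∧ y i ≤ (t:ℤ)) ∧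
    ((k:ℤ) * t - t ≤ ∑ i, y i ∧ ∑ i, y i ≤ (k:ℤ) * t)} with hB'
  set B : Set (Fin m → ℤ) := {y | (∀ i, 0 ≤ y i ∧ y i ≤ (t:ℤ)) ∧
    ((k:ℤ) - 1) * t < ∑ i, y i ∧ ∑ i, y i ≤ (k:ℤ) * t} with hB
  set C : Set (Fin m → ℤ) := {y | (∀ i, 0 ≤ y i ∧ y i ≤ (t:ℤ)) ∧
    ∑ i, y i = ((k-1 : ℕ):ℤ) * t} with hC
  have hunion : B' = B ∪ C := by
    ext y
    simp only [hB', hB, hC, Set.mem_setOf_eq, Set.mem_union, hcast]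
    constructor
    · rintro ⟨hb, h1, h2⟩
      rcases lt_or_eq_of_le h1 with h | h
      · exact Or.inl ⟨hb, by linarith, h2⟩
      · exact Or.inr ⟨hb, by linarith⟩
    · rintro (⟨hb, h1, h2⟩ | ⟨hb, h⟩)
      · exact ⟨hb, by linarith, h2⟩
      · have ht0 : (0:ℤ) ≤ t := Int.ofNat_nonneg t
        have : ((k:ℤ) - 1) * t + t = (k:ℤ) * t := by ring
        exact ⟨hb, by linarith, by linarith⟩
  have hdisj : Disjoint B C := by
    rw [Set.disjoint_left]
    rintro y ⟨hb, h1, h2⟩ ⟨hb', h⟩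
    rw [hcast] at h
    rw [h] at h1
    exact lt_irrefl _ h1
  have hBfin : B.Finite := box_finite m t B (fun x hx => hx.1)
  have hCfin : C.Finite := box_finite m t C (fun x hx => hx.1)
  have h1 : Nat.card {y : Fin m → ℤ // (∀ i, 0 ≤ y i ∧ y i ≤ (t:ℤ)) ∧
      ((k:ℤ) * t - t ≤ ∑ i, y i ∧ ∑ i, y i ≤ (k:ℤ) * t)} = B'.ncard :=
    Nat.card_coe_set_eq B'
  rw [h1, hunion, Set.ncard_union_eq hdisj hBfin hCfin]
  rw [halfOpenCount, hyperCount]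
  rfl

theorem halfOpen_dilate_counts (k n : ℕ) (hk : 1 < k) (hkn : k < n - 1)
    (t : ℕ) (ht : 1 ≤ t) :
    latticeCount ((t : ℝ) • halfOpenSimplexReal k n) = halfOpenCount k n t ∧
      halfOpenCount k n t = hyperCount k n t - hyperCount (k - 1) (n - 1) t := by
  have ht0 : (0:ℝ) < (t:ℝ) := by exact_mod_cast ht
  have ht0' : (t:ℝ) ≠ 0 := ne_of_gt ht0
  constructor
  · apply Nat.card_congr
    apply Equiv.subtypeEquivRight
    intro x
    rw [Set.mem_smul_set_iff_inv_smul_mem₀ ht0']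
    simp only [halfOpenSimplexReal, Set.mem_setOf_eq, Pi.smul_apply, smul_eq_mul,
      ← Finset.mul_sum, le_inv_mul_iff₀ ht0, inv_mul_le_iff₀ ht0, lt_inv_mul_iff₀ ht0,
      mul_zero, mul_one]
    constructor
    · rintro ⟨hb, h1, h2⟩
      refine ⟨fun i => ⟨by exact_mod_cast (hb i).1, by exact_mod_cast (hb i).2⟩, ?_, ?_⟩
      · have h : ((k:ℝ)-1)*t < ∑ i, ((x i : ℤ):ℝ) := by linarith
        exact_mod_cast h
      · have h : (∑ i, ((x i : ℤ):ℝ)) ≤ (k:ℝ)*t := by linarith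
        exact_mod_cast h
    · rintro ⟨hb, h1, h2⟩
      refine ⟨fun i => ⟨by exact_mod_cast (hb i).1, by exact_mod_cast (hb i).2⟩, ?_, ?_⟩
      · have h : ((k:ℝ)-1)*t < ∑ i, ((x i : ℤ):ℝ) := by exact_mod_cast h1
        linarith
      · have h : (∑ i, ((x i : ℤ):ℝ)) ≤ (k:ℝ)*t := by exact_mod_cast h2
        linarith
  · obtain ⟨m, rfl⟩ : ∃ m, n = m + 1 := ⟨n - 1, by omega⟩
    have h := hyper_split m k t (le_of_lt hk)
    simp only [Nat.add_sub_cancel] at *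
    omega
end
end
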